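/- arXiv:1604.07523 — 12 statements merged into one kernel-verified Lean document; each statement's English description precedes it below -/
import Mathlib

section
/- Let X be a topological space, λ a nonzero ordinal, and (F_α)_{α ≤ λ} a transfinite sequence of closed subsets of X such that F_0 = X, F_λ = ∅, F_{α+1} ⊆ F_α for every α < λ, and F_α = ⋂_{β<α} F_β for every limit ordinal α ≤ λ. Let Y be the topological sum ⊕_{α<λ} (F_α ∖ F_{α+1}) of the subspaces F_α ∖ F_{α+1} of X. Then the natural map i : X → Y, sending each point x ∈ F_α ∖ F_{α+1} to the corresponding point of the α-th summand, is a well-defined bijection and is weakly discontinuous. -/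
open Set Function Topology

/-- A map `f : X → Y` is weakly discontinuous if every nonempty subset `A ⊆ X`
contains a nonempty subset `U`, open in the subspace topology of `A`, on which
`f` restricts to a continuous map. -/
def WeaklyDiscontinuous {X Y : Type*} [TopologicalSpace X] [TopologicalSpace Y]
    (f : X → Y) : Prop :=
  ∀ A : Set X, A.Nonempty → ∃ U : Set X, U ⊆ A ∧ U.Nonempty ∧
    (∃ V : Set X, IsOpen V ∧ U = A ∩ V) ∧ ContinuousOn f U

/-- Topological spaces `X` and `Y` are weakly homeomorphic if there is a bijection
`f : X → Y` such that both `f` and its inverse are weakly discontinuous. -/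
def WeaklyHomeomorphic (X : Type*) (Y : Type*) [TopologicalSpace X] [TopologicalSpace Y] :
    Prop :=
  ∃ (f : X → Y) (g : Y → X), Function.LeftInverse g f ∧ Function.RightInverse g f ∧
    WeaklyDiscontinuous f ∧ WeaklyDiscontinuous g

universe u v

/-! The strata `F α \ F (α + 1)` partition `X`: the first `α` with `x ∉ F α` is neither `0` nor a
limit, so it is a successor `β + 1`, and `x` lies in the stratum `β` and in no other, by
antitonicity. The same argument applied to a nonempty `A ⊆ X` gives the first `β` with
`A ⊄ F (β + 1)`. Then `A \ F (β + 1)` is nonempty, relatively open in `A` since `F (β + 1)` is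
closed, and contained in the single stratum `β`, on which `i` is the inclusion into one summand. -/

namespace Ordinal

theorem forall_le_of_zero_of_succ_of_limit {P : Ordinal → Prop} (lam : Ordinal)
    (zero : P 0) (succ : ∀ γ < lam, P γ → P (γ + 1))
    (limit : ∀ γ ≤ lam, Order.IsSuccLimit γ → (∀ δ < γ, P δ) → P γ) :
    ∀ γ ≤ lam, P γ := by
  intro γ
  induction γ using limitRecOn with
  | zero => exact fun _ ↦ zero
  | add_one γ ih =>
    intro hγ
    have hγlam : γ < lam := (Order.lt_add_one_iff.mpr le_rfl).trans_le hγ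
    exact succ γ hγlam (ih hγlam.le)
  | limit γ hγ ih => exact fun hγlam ↦ limit γ hγlam hγ fun δ hδ ↦ ih δ hδ (hδ.le.trans hγlam)

variable {β : Type*} {lam : Ordinal} {F : Ordinal → β}

theorem eq_of_le_and_not_le_succ [Preorder β] (hanti : AntitoneOn F (Iic lam)) {a : β}
    {α γ : Ordinal} (hα : α < lam) (hγ : γ < lam) (haα : a ≤ F α ∧ ¬a ≤ F (α + 1))
    (haγ : a ≤ F γ ∧ ¬a ≤ F (γ + 1)) : α = γ := by
  have hle : ∀ {α γ}, α < lam → γ < lam → a ≤ F γ → ¬a ≤ F (α + 1) → γ ≤ α := by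
    intro α γ hα hγ haγ haα
    by_contra! hlt
    exact haα (haγ.trans (hanti (Order.add_one_le_of_lt hα) hγ.le (Order.add_one_le_of_lt hlt)))
  exact le_antisymm (hle hγ hα haα.1 haγ.2) (hle hα hγ haγ.1 haα.2)

variable [CompleteLattice β]

theorem antitoneOn_Iic_of_succ_le_of_eq_iInf (hsucc : ∀ γ < lam, F (γ + 1) ≤ F γ)
    (hlim : ∀ γ ≤ lam, Order.IsSuccLimit γ → F γ = ⨅ δ < γ, F δ) :
    AntitoneOn F (Iic lam) := by
  intro α _ γ hγ hαγ
  refine forall_le_of_zero_of_succ_of_limit (P := fun γ ↦ α ≤ γ → F γ ≤ F α) lam ?_ ?_ ?_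
    γ hγ hαγ
  · intro hα
    rw [nonpos_iff_eq_zero.mp hα]
  · intro γ hγlam ih hα
    rcases hα.eq_or_lt with rfl | hα
    · exact le_rfl
    · exact (hsucc γ hγlam).trans (ih (Order.lt_add_one_iff.mp hα))
  · intro γ hγlam hγ _ hα
    rcases hα.eq_or_lt with rfl | hα
    · exact le_rfl
    · exact (hlim γ hγlam hγ).trans_le (iInf₂_le α hα)

theorem exists_le_and_not_le_succ {a : β} (h0 : a ≤ F 0) (hlam : ¬a ≤ F lam)
    (hlim : ∀ γ ≤ lam, Order.IsSuccLimit γ → F γ = ⨅ δ < γ, F δ) :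
    ∃ γ < lam, a ≤ F γ ∧ ¬a ≤ F (γ + 1) := by
  by_contra! hsucc
  refine hlam (forall_le_of_zero_of_succ_of_limit lam h0 hsucc ?_ lam le_rfl)
  intro γ hγlam hγ ih
  rw [hlim γ hγlam hγ]
  exact le_iInf₂ ih

end Ordinal

theorem continuousOn_of_forall_fst_eq {X ι : Type*} [TopologicalSpace X] {S : ι → Set X}
    {i : X → Σ j, S j} (hi : ∀ x, ((i x).2 : X) = x) {U : Set X} {j : ι}
    (hU : ∀ x ∈ U, (i x).1 = j) : ContinuousOn i U := by
  have hUS : ∀ x : U, (x : X) ∈ S j := fun x ↦ by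
    have := (i x).2.2
    rwa [hi, hU x x.2] at this
  have hrestrict : U.domRestrict i = Sigma.mk j ∘ fun x ↦ ⟨x, hUS x⟩ :=
    funext fun x ↦ Sigma.subtype_ext (hU x x.2) (hi x)
  rw [continuousOn_iff_continuous_domRestrict, hrestrict]
  exact continuous_sigmaMk.comp (continuous_subtype_val.subtype_mk _)

theorem weaklyDiscontinuous_of_transfinite_decomposition_general
    {X : Type u} [TopologicalSpace X] (lam : Ordinal.{v})
    (F : Ordinal.{v} → Set X)
    (hclosed : ∀ α ≤ lam, IsClosed (F α))
    (h0 : F 0 = Set.univ) (htop : F lam = ∅)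
    (hmono : ∀ α < lam, F (α + 1) ⊆ F α)
    (hlim : ∀ α ≤ lam, Order.IsSuccLimit α → F α = ⋂ β < α, F β) :
    ∃ i : X → (α : {a : Ordinal.{v} // a < lam}) × ↥(F α.1 \ F (α.1 + 1)),
      (∀ x : X, ((i x).2 : X) = x) ∧ Function.Bijective i ∧ WeaklyDiscontinuous i := by
  have hanti := Ordinal.antitoneOn_Iic_of_succ_le_of_eq_iInf hmono hlim
  have hstratum : ∀ {A : Set X}, A.Nonempty → ∃ α < lam, A ⊆ F α ∧ ¬A ⊆ F (α + 1) :=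
    fun hA ↦ Ordinal.exists_le_and_not_le_succ (h0 ▸ subset_univ _)
      (fun h ↦ hA.ne_empty (subset_empty_iff.mp (htop ▸ h))) hlim
  have hunique : ∀ {x α γ}, α < lam → γ < lam → x ∈ F α \ F (α + 1) →
      x ∈ F γ \ F (γ + 1) → α = γ := fun hα hγ hxα hxγ ↦
    Ordinal.eq_of_le_and_not_le_succ (a := {_}) hanti hα hγ
      (by simpa using hxα) (by simpa using hxγ)
  have hrank : ∀ x, ∃ α < lam, x ∈ F α \ F (α + 1) := fun x ↦ by
    simpa using hstratum (singleton_nonempty x)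
  choose r hr_lt hr using hrank
  let i : X → (α : {a : Ordinal.{v} // a < lam}) × ↥(F α.1 \ F (α.1 + 1)) :=
    fun x ↦ ⟨⟨r x, hr_lt x⟩, x, hr x⟩
  have hi : LeftInverse (fun p ↦ (p.2 : X)) i := fun _ ↦ rfl
  refine ⟨i, hi, ⟨hi.injective, ?_⟩, ?_⟩
  · rintro ⟨⟨α, hα⟩, x, hx⟩
    exact ⟨x, Sigma.subtype_ext (Subtype.ext (hunique (hr_lt x) hα (hr x) hx)) rfl⟩
  · intro A hA
    obtain ⟨α, hα, hAα, hAα'⟩ := hstratum hA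
    refine ⟨A ∩ (F (α + 1))ᶜ, inter_subset_left, not_subset.mp hAα',
      ⟨_, (hclosed _ (Order.add_one_le_of_lt hα)).isOpen_compl, rfl⟩,
      continuousOn_of_forall_fst_eq (j := ⟨α, hα⟩) hi fun x hx ↦ Subtype.ext ?_⟩
    exact hunique (hr_lt x) hα (hr x) ⟨hAα hx.1, hx.2⟩

theorem weaklyDiscontinuous_of_transfinite_decomposition
    {X : Type u} [TopologicalSpace X] (lam : Ordinal.{v}) (hlam : lam ≠ 0)
    (F : Ordinal.{v} → Set X)
    (hclosed : ∀ α ≤ lam, IsClosed (F α))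
    (h0 : F 0 = Set.univ) (htop : F lam = ∅)
    (hmono : ∀ α < lam, F (α + 1) ⊆ F α)
    (hlim : ∀ α ≤ lam, Order.IsSuccLimit α → F α = ⋂ β < α, F β) :
    ∃ i : X → (α : {a : Ordinal.{v} // a < lam}) × ↥(F α.1 \ F (α.1 + 1)),
      (∀ x : X, ((i x).2 : X) = x) ∧ Function.Bijective i ∧ WeaklyDiscontinuous i :=
  weaklyDiscontinuous_of_transfinite_decomposition_general lam F hclosed h0 htop hmono hlim
end

section
/- Let X be a Hausdorff paracompact topological space in which every open subset is an Fσ-set (i.e., X is perfectly paracompact), let Y be a topological space, and let f : X → Y be a weakly discontinuous map. Then there exists a countable cover of X by closed subsets C such that the restriction f|C : C → Y is continuous for every member C of the cover. -/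
open Set Function Topology

/-!
Call an open set `O` good if `f` is σ-continuous (`SigmaContinuousOn`) on every closed subset
of `O`. By paracompactness a closed set covered by good open sets splits into a locally finite
family of closed pieces, each inside a good set, and gluing their decompositions level by level
shows that the union `W` of all good sets is good. If `W ≠ X`, weak discontinuity gives an open
`V` meeting `Wᶜ` with `f` continuous on `Wᶜ ∩ V`; since `W` is an `Fσ`, a closed `Z ⊆ W ∪ V` is
`(Z ∩ Wᶜ) ∪ ⋃ n, Z ∩ Kₙ` with `Kₙ` closed in `W`, so `W ∪ V` is good as well, contradicting the
maximality of `W`.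
-/

section

variable {X Y : Type*} [TopologicalSpace X] [TopologicalSpace Y] {f : X → Y}

def SigmaContinuousOn (f : X → Y) (Z : Set X) : Prop :=
  ∃ C : ℕ → Set X, (∀ n, IsClosed (C n)) ∧ ⋃ n, C n = Z ∧ ∀ n, ContinuousOn f (C n)

namespace SigmaContinuousOn

theorem of_isClosed {Z : Set X} (hZ : IsClosed Z) (hf : ContinuousOn f Z) :
    SigmaContinuousOn f Z :=
  ⟨fun _ => Z, fun _ => hZ, iUnion_const Z, fun _ => hf⟩

protected theorem iUnion {ι : Type*} [Countable ι] [Nonempty ι] {Z : ι → Set X}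
    (h : ∀ i, SigmaContinuousOn f (Z i)) : SigmaContinuousOn f (⋃ i, Z i) := by
  choose C hC hCZ hCf using h
  obtain ⟨e, he⟩ := exists_surjective_nat (ι × ℕ)
  refine ⟨fun k => C (e k).1 (e k).2, fun k => hC _ _, ?_, fun k => hCf _ _⟩
  rw [he.iUnion_comp (fun p => C p.1 p.2), iUnion_prod']
  simp only [hCZ]

protected theorem union {A B : Set X} (hA : SigmaContinuousOn f A)
    (hB : SigmaContinuousOn f B) : SigmaContinuousOn f (A ∪ B) := by
  rw [union_eq_iUnion]
  exact SigmaContinuousOn.iUnion fun b => by cases b <;> assumption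

theorem iUnion_of_locallyFinite {ι : Type*} {E : ι → Set X} (hE : LocallyFinite E)
    (h : ∀ i, SigmaContinuousOn f (E i)) : SigmaContinuousOn f (⋃ i, E i) := by
  choose C hC hCE hCf using h
  have hlf : ∀ n, LocallyFinite fun i => C i n := fun n =>
    hE.subset fun i => hCE i ▸ subset_iUnion (C i) n
  refine ⟨fun n => ⋃ i, C i n, fun n => (hlf n).isClosed_iUnion (hC · n), ?_,
    fun n => (hlf n).continuousOn_iUnion (hC · n) (hCf · n)⟩
  rw [iUnion_comm]
  simp only [hCE]

end SigmaContinuousOn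

theorem exists_locallyFinite_isClosed_cover_subordinate [ParacompactSpace X] [T2Space X]
    {ι : Type*} {Z : Set X} (hZ : IsClosed Z) {u : ι → Set X} (hu : ∀ i, IsOpen (u i))
    (hZu : Z ⊆ ⋃ i, u i) :
    ∃ E : ι → Set X, (∀ i, IsClosed (E i)) ∧ LocallyFinite E ∧ (∀ i, E i ⊆ u i) ∧
      ⋃ i, E i = Z := by
  obtain ⟨v, hv, hZv, hvlf, hvu⟩ := precise_refinement_set hZ u hu hZu
  obtain ⟨w, hZw, hw, hwv⟩ :=
    exists_subset_iUnion_closed_subset hZ hv (fun x _ => hvlf.point_finite x) hZv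
  refine ⟨fun i => Z ∩ w i, fun i => hZ.inter (hw i),
    hvlf.subset fun i => inter_subset_right.trans (hwv i),
    fun i => inter_subset_right.trans ((hwv i).trans (hvu i)), ?_⟩
  rw [← inter_iUnion]
  exact inter_eq_left.2 hZw

def SigmaContinuousOnClosedSubsets (f : X → Y) (O : Set X) : Prop :=
  ∀ Z, IsClosed Z → Z ⊆ O → SigmaContinuousOn f Z

namespace SigmaContinuousOnClosedSubsets

protected theorem iUnion [ParacompactSpace X] [T2Space X] {ι : Type*} {u : ι → Set X}
    (hu : ∀ i, IsOpen (u i)) (h : ∀ i, SigmaContinuousOnClosedSubsets f (u i)) :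
    SigmaContinuousOnClosedSubsets f (⋃ i, u i) := by
  intro Z hZ hZu
  obtain ⟨E, hEc, hElf, hEu, rfl⟩ := exists_locallyFinite_isClosed_cover_subordinate hZ hu hZu
  exact SigmaContinuousOn.iUnion_of_locallyFinite hElf fun i => h i _ (hEc i) (hEu i)

theorem union_of_continuousOn {W V : Set X} (hW : SigmaContinuousOnClosedSubsets f W)
    (hWo : IsOpen W) (hWσ : ∃ K : ℕ → Set X, (∀ n, IsClosed (K n)) ∧ W = ⋃ n, K n)
    (hV : ContinuousOn f (Wᶜ ∩ V)) : SigmaContinuousOnClosedSubsets f (W ∪ V) := by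
  intro Z hZ hZWV
  obtain ⟨K, hK, hWK⟩ := hWσ
  have hsplit : Z = (Z ∩ Wᶜ) ∪ ⋃ n, Z ∩ K n := by
    rw [← inter_iUnion, ← hWK, ← inter_union_distrib_left, compl_union_self, inter_univ]
  rw [hsplit]
  refine .union (.of_isClosed (hZ.inter hWo.isClosed_compl) (hV.mono ?_)) (.iUnion fun n =>
    hW _ (hZ.inter (hK n)) (inter_subset_right.trans (hWK ▸ subset_iUnion K n)))
  exact fun x ⟨hxZ, hxW⟩ => ⟨hxW, (hZWV hxZ).resolve_left hxW⟩

end SigmaContinuousOnClosedSubsets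

end

theorem weaklyDiscontinuous_countable_closed_cover
    {X Y : Type*} [TopologicalSpace X] [TopologicalSpace Y]
    [T2Space X] [ParacompactSpace X]
    (hFsigma : ∀ U : Set X, IsOpen U →
      ∃ C : ℕ → Set X, (∀ n, IsClosed (C n)) ∧ U = ⋃ n, C n)
    (f : X → Y) (hf : WeaklyDiscontinuous f) :
    ∃ C : ℕ → Set X, (∀ n, IsClosed (C n)) ∧ (⋃ n, C n) = Set.univ ∧
      ∀ n, ContinuousOn f (C n) := by
  set 𝒢 : Set (Set X) := {O | IsOpen O ∧ SigmaContinuousOnClosedSubsets f O}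
  set W := ⋃₀ 𝒢 with hW_def
  have hWo : IsOpen W := isOpen_sUnion fun O hO => hO.1
  have hW : SigmaContinuousOnClosedSubsets f W := by
    rw [hW_def, sUnion_eq_iUnion]
    exact .iUnion (fun O => O.2.1) fun O => O.2.2
  have hWuniv : W = univ := by
    by_contra hne
    obtain ⟨U, -, ⟨x, hxU⟩, ⟨V, hV, rfl⟩, hfU⟩ := hf Wᶜ (nonempty_compl.2 hne)
    have hWV : W ∪ V ⊆ W := subset_sUnion_of_mem
      ⟨hWo.union hV, hW.union_of_continuousOn hWo (hFsigma W hWo) hfU⟩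
    exact hxU.1 (hWV (Or.inr hxU.2))
  exact hW univ isClosed_univ hWuniv.ge
end

section
/- Let κ be a cardinal and let P be a property of topological spaces (in a fixed universe) that is closed-hereditary (every closed subspace and every finite subspace of a space with P has P), projective (the image of a space with P under a continuous surjection has P), and κ-summable (for every family (C_i)_{i∈I} of spaces with property P with |I| ≤ κ, the topological sum ⊕_{i∈I} C_i has P). Let f : X → Y be a surjective weakly discontinuous map between topological spaces, and assume there exists a cover 𝒞 of X with |𝒞| ≤ κ such that every member of 𝒞 is closed or finite and f|C is continuous for every C ∈ 𝒞. If X has property P, then Y has property P. -/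
open Set Function Topology

universe u

/-! The topological sum of the pieces `C ∈ 𝒞` maps continuously onto `Y` by `f`, and this
sum inherits the property from `X`: each piece is a closed or finite subspace of `X`, and
there are at most `κ` of them. -/

section SigmaRestrict

variable {ι X Y : Type*} {s : ι → Set X} {f : X → Y}

theorem continuous_sigma_restrict_of_continuousOn [TopologicalSpace X] [TopologicalSpace Y]
    (hf : ∀ i, ContinuousOn f (s i)) :
    Continuous fun p : (i : ι) × s i => f p.2 :=
  continuous_sigma fun i => (hf i).domRestrict

theorem surjective_sigma_restrict_of_iUnion_eq_univ (hs : ⋃ i, s i = univ)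
    (hf : Surjective f) : Surjective fun p : (i : ι) × s i => f p.2 := by
  intro y
  obtain ⟨x, rfl⟩ := hf y
  obtain ⟨i, hxi⟩ := mem_iUnion.mp (hs ▸ mem_univ x)
  exact ⟨⟨i, x, hxi⟩, rfl⟩

end SigmaRestrict

theorem image_of_weaklyDiscontinuous_has_property_general
    (κ : Cardinal.{u})
    (P : (Z : Type u) → [inst : TopologicalSpace Z] → Prop)
    (hclosedHer : ∀ (Z : Type u) [TopologicalSpace Z], P Z →
      ∀ A : Set Z, (IsClosed A ∨ A.Finite) → P ↥A)
    (hproj : ∀ (Z W : Type u) [TopologicalSpace Z] [TopologicalSpace W], P Z →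
      ∀ g : Z → W, Continuous g → Function.Surjective g → P W)
    (hsum : ∀ (I : Type u) (C : I → Type u) [∀ i, TopologicalSpace (C i)],
      Cardinal.mk I ≤ κ → (∀ i, P (C i)) → P ((i : I) × C i))
    {X Y : Type u} [TopologicalSpace X] [TopologicalSpace Y]
    (f : X → Y) (hsurj : Function.Surjective f)
    (𝒞 : Set (Set X)) (hcard : Cardinal.mk ↥𝒞 ≤ κ)
    (hcf : ∀ C ∈ 𝒞, IsClosed C ∨ C.Finite)
    (hcover : ⋃₀ 𝒞 = Set.univ)
    (hcont : ∀ C ∈ 𝒞, ContinuousOn f C)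
    (hX : P X) : P Y := by
  have hPsum : P ((C : 𝒞) × (C : Set X)) :=
    hsum 𝒞 (fun C => (C : Set X)) hcard fun C => hclosedHer X hX C (hcf C C.2)
  exact hproj _ Y hPsum _
    (continuous_sigma_restrict_of_continuousOn fun C => hcont C C.2)
    (surjective_sigma_restrict_of_iUnion_eq_univ (sUnion_eq_iUnion ▸ hcover) hsurj)

theorem image_of_weaklyDiscontinuous_has_property
    (κ : Cardinal.{u})
    (P : (Z : Type u) → [inst : TopologicalSpace Z] → Prop)
    (hclosedHer : ∀ (Z : Type u) [TopologicalSpace Z], P Z →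
      ∀ A : Set Z, (IsClosed A ∨ A.Finite) → P ↥A)
    (hproj : ∀ (Z W : Type u) [TopologicalSpace Z] [TopologicalSpace W], P Z →
      ∀ g : Z → W, Continuous g → Function.Surjective g → P W)
    (hsum : ∀ (I : Type u) (C : I → Type u) [∀ i, TopologicalSpace (C i)],
      Cardinal.mk I ≤ κ → (∀ i, P (C i)) → P ((i : I) × C i))
    {X Y : Type u} [TopologicalSpace X] [TopologicalSpace Y]
    (f : X → Y) (hsurj : Function.Surjective f) (hwd : WeaklyDiscontinuous f)
    (𝒞 : Set (Set X)) (hcard : Cardinal.mk ↥𝒞 ≤ κ)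
    (hcf : ∀ C ∈ 𝒞, IsClosed C ∨ C.Finite)
    (hcover : ⋃₀ 𝒞 = Set.univ)
    (hcont : ∀ C ∈ 𝒞, ContinuousOn f C)
    (hX : P X) : P Y :=
  image_of_weaklyDiscontinuous_has_property_general κ P hclosedHer hproj hsum f hsurj 𝒞 hcard hcf
    hcover hcont hX
end

section
/- Let f : X → Y be a surjective weakly discontinuous map between topological spaces, where X is Hausdorff, hereditarily Lindelöf, and σ-compact. Then Y is hereditarily Lindelöf and σ-compact. -/
/-!
Hereditary Lindelöfness lets one exhaust `X` by countably many locally closed pieces on which `f`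
is continuous: the points having no open neighbourhood covered by countably many such pieces form a
closed set, and a relatively open piece of it given by weak discontinuity shows that it is empty.
Both properties then pass to `Y` piece by piece. For σ-compactness, a locally closed set is a
countable union of open subsets of compact sets, and these are locally compact and Lindelöf.
-/

open Set Function Topology

section

variable {X Y : Type*} [TopologicalSpace X] [TopologicalSpace Y]

theorem sigmaCompactSpace_of_weaklyLocallyCompact_lindelof [WeaklyLocallyCompactSpace X]
    [LindelofSpace X] : SigmaCompactSpace X := by
  choose K hKc hxK using fun x : X => exists_compact_mem_nhds x
  obtain ⟨s, hsc, hsU⟩ := isLindelof_univ.elim_nhds_subcover K fun x _ => hxK x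
  refine SigmaCompactSpace.of_countable _ (hsc.image K) (forall_mem_image.2 fun x _ => hKc x) ?_
  rw [sUnion_image]
  exact univ_subset_iff.mp hsU.2

theorem IsCompact.isSigmaCompact_inter_of_isOpen [T2Space X] [HereditarilyLindelofSpace X]
    {C U : Set X} (hC : IsCompact C) (hU : IsOpen U) : IsSigmaCompact (C ∩ U) := by
  have : CompactSpace C := isCompact_iff_compactSpace.mp hC
  have : LocallyCompactSpace (Subtype.val ⁻¹' U : Set C) :=
    (hU.preimage continuous_subtype_val).locallyCompactSpace
  have : SigmaCompactSpace (Subtype.val ⁻¹' U : Set C) :=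
    sigmaCompactSpace_of_weaklyLocallyCompact_lindelof
  have := isSigmaCompact_range (X := (Subtype.val ⁻¹' U : Set C))
    (continuous_subtype_val.comp continuous_subtype_val)
  rwa [range_comp, Subtype.range_coe, Subtype.image_preimage_coe] at this

theorem IsLocallyClosed.isSigmaCompact [T2Space X] [HereditarilyLindelofSpace X]
    [SigmaCompactSpace X] {s : Set X} (hs : IsLocallyClosed s) : IsSigmaCompact s := by
  obtain ⟨U, Z, hU, hZ, rfl⟩ := hs
  have hcover : U ∩ Z = ⋃ n, (compactCovering X n ∩ Z) ∩ U := by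
    rw [← iUnion_inter, ← iUnion_inter, iUnion_compactCovering, univ_inter, inter_comm]
  rw [hcover]
  exact isSigmaCompact_iUnion _ fun n =>
    ((isCompact_compactCovering X n).inter_right hZ).isSigmaCompact_inter_of_isOpen hU

theorem exists_countable_cover_sUnion_of_isOpen [HereditarilyLindelofSpace X]
    {P : Set X → Prop} {𝒱 : Set (Set X)} (h𝒱 : ∀ V ∈ 𝒱, IsOpen V)
    (hcover : ∀ V ∈ 𝒱, ∃ S : Set (Set X), S.Countable ∧ (∀ s ∈ S, P s) ∧ V ⊆ ⋃₀ S) :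
    ∃ S : Set (Set X), S.Countable ∧ (∀ s ∈ S, P s) ∧ ⋃₀ 𝒱 ⊆ ⋃₀ S := by
  choose S hSc hSP hVS using fun V : 𝒱 => hcover V.1 V.2
  obtain ⟨t, htc, ht⟩ := eq_open_union_countable (fun V : 𝒱 => V.1) fun V => h𝒱 V.1 V.2
  refine ⟨⋃ V ∈ t, S V, htc.biUnion fun V _ => hSc V, fun s hs => ?_, ?_⟩
  · obtain ⟨V, -, hs⟩ := mem_iUnion₂.mp hs
    exact hSP V s hs
  · rw [sUnion_eq_iUnion, ← ht]
    intro x hx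
    obtain ⟨V, hV, hxV⟩ := mem_iUnion₂.mp hx
    obtain ⟨s, hs, hxs⟩ := hVS V hxV
    exact ⟨s, mem_iUnion₂.mpr ⟨V, hV, hs⟩, hxs⟩

theorem exists_countable_sUnion_eq_univ_of_forall_isClosed [HereditarilyLindelofSpace X]
    (P : Set X → Prop)
    (hP : ∀ Z, IsClosed Z → Z.Nonempty → ∃ V, IsOpen V ∧ (Z ∩ V).Nonempty ∧ P (Z ∩ V)) :
    ∃ S : Set (Set X), S.Countable ∧ (∀ s ∈ S, P s) ∧ ⋃₀ S = univ := by
  set good := {V : Set X | IsOpen V ∧ ∃ S : Set (Set X), S.Countable ∧ (∀ s ∈ S, P s) ∧ V ⊆ ⋃₀ S}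
  obtain ⟨S, hSc, hSP, hgood⟩ :=
    exists_countable_cover_sUnion_of_isOpen (P := P) (𝒱 := good) (fun V hV => hV.1)
      fun V hV => hV.2
  refine ⟨S, hSc, hSP, univ_subset_iff.mp fun x _ => hgood ?_⟩
  by_contra hx
  obtain ⟨V, hV, ⟨y, hyZ, hyV⟩, hPV⟩ :=
    hP (⋃₀ good)ᶜ (isOpen_sUnion fun V hV => hV.1).isClosed_compl ⟨x, hx⟩
  have hVgood : V ∈ good := by
    refine ⟨hV, insert ((⋃₀ good)ᶜ ∩ V) S, hSc.insert _, forall_mem_insert.mpr ⟨hPV, hSP⟩,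
      fun z hzV => ?_⟩
    by_cases hz : z ∈ ⋃₀ good
    · exact sUnion_subset_sUnion (subset_insert _ _) (hgood hz)
    · exact ⟨_, mem_insert _ _, hz, hzV⟩
  exact hyZ (subset_sUnion_of_mem hVgood hyV)

theorem WeaklyDiscontinuous.exists_countable_cover [HereditarilyLindelofSpace X] {f : X → Y}
    (hf : WeaklyDiscontinuous f) :
    ∃ S : Set (Set X), S.Countable ∧ (∀ s ∈ S, IsLocallyClosed s ∧ ContinuousOn f s) ∧
      ⋃₀ S = univ :=
  exists_countable_sUnion_eq_univ_of_forall_isClosed _ fun Z hZ hne => by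
    obtain ⟨U, -, hU, ⟨V, hV, rfl⟩, hfU⟩ := hf Z hne
    exact ⟨V, hV, hU, hZ.isLocallyClosed.inter hV.isLocallyClosed, hfU⟩

theorem HereditarilyLindelofSpace.of_continuousOn_countable_cover [HereditarilyLindelofSpace X]
    {f : X → Y} (hf : Surjective f) {S : Set (Set X)} (hS : S.Countable)
    (hfS : ∀ s ∈ S, ContinuousOn f s) (hcover : ⋃₀ S = univ) : HereditarilyLindelofSpace Y := by
  refine ⟨fun t _ => ?_⟩
  have ht : t = ⋃ s ∈ S, f '' (s ∩ f ⁻¹' t) := by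
    rw [← image_iUnion₂, ← iUnion₂_inter, ← sUnion_eq_biUnion, hcover, univ_inter,
      image_preimage_eq t hf]
  rw [ht]
  exact hS.isLindelof_biUnion fun s hs =>
    (HereditarilyLindelofSpace.isLindelof _).image_of_continuousOn
      ((hfS s hs).mono inter_subset_left)

theorem SigmaCompactSpace.of_continuousOn_countable_cover {f : X → Y} (hf : Surjective f)
    {S : Set (Set X)} (hS : S.Countable) (hσ : ∀ s ∈ S, IsSigmaCompact s)
    (hfS : ∀ s ∈ S, ContinuousOn f s) (hcover : ⋃₀ S = univ) : SigmaCompactSpace Y := by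
  rw [← isSigmaCompact_univ_iff, ← image_univ_of_surjective hf, ← hcover, sUnion_eq_biUnion,
    image_iUnion₂]
  exact isSigmaCompact_biUnion hS fun s hs => (hσ s hs).image_of_continuousOn (hfS s hs)

end

theorem hereditarilyLindelof_sigmaCompact_image
    {X Y : Type*} [TopologicalSpace X] [TopologicalSpace Y]
    [T2Space X] [HereditarilyLindelofSpace X] [SigmaCompactSpace X]
    (f : X → Y) (hsurj : Function.Surjective f) (hwd : WeaklyDiscontinuous f) :
    HereditarilyLindelofSpace Y ∧ SigmaCompactSpace Y := by
  obtain ⟨S, hSc, hSf, hcover⟩ := hwd.exists_countable_cover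
  exact ⟨.of_continuousOn_countable_cover hsurj hSc (fun s hs => (hSf s hs).2) hcover,
    .of_continuousOn_countable_cover hsurj hSc (fun s hs => (hSf s hs).1.isSigmaCompact)
      (fun s hs => (hSf s hs).2) hcover⟩
end

section
/- A topological space X is analytic (i.e., there exist a Polish space P and a continuous surjection P → X) if and only if there exist a Polish space P and a surjective weakly discontinuous map f : P → X. -/
/-!
By weak discontinuity every nonempty `A ⊆ P` has a nonempty relatively open piece `A ∩ V` on which
`f` is continuous. Let `W` be the union of all open sets covered by countably many locally closed
sets on which `f` is continuous; by the Lindelöf property `W` is itself so covered. If `W ≠ P`, the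
piece `Wᶜ ∩ V` obtained from `A = Wᶜ` shows that `W ∪ V` is so covered too, although `V ⊄ W`.
Locally closed subsets of a Polish space are Polish, so the disjoint union of the countably many
pieces is a Polish space mapping continuously onto the image of `f`.
-/

open Set Function Topology

universe u

section

variable {X Y : Type*} [TopologicalSpace X] [TopologicalSpace Y]

theorem Continuous.weaklyDiscontinuous {f : X → Y} (hf : Continuous f) : WeaklyDiscontinuous f :=
  fun A hA => ⟨A, Subset.rfl, hA, ⟨univ, isOpen_univ, (inter_univ A).symm⟩, hf.continuousOn⟩

theorem IsLocallyClosed.polishSpace [PolishSpace X] {s : Set X} (hs : IsLocallyClosed s) :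
    PolishSpace s := by
  obtain ⟨U, Z, hU, hZ, rfl⟩ := hs
  have : PolishSpace U := hU.polishSpace
  have hsub : U ∩ Z ⊆ U := inter_subset_left
  have hrange : range (inclusion hsub) = Subtype.val ⁻¹' Z := by
    ext x
    simp [range_inclusion]
  exact IsClosedEmbedding.polishSpace
    ⟨IsEmbedding.inclusion hsub, hrange ▸ hZ.preimage continuous_subtype_val⟩

def CountablyPiecewiseContinuousOn (f : X → Y) (s : Set X) : Prop :=
  ∃ S : Set (Set X), S.Countable ∧ (∀ L ∈ S, IsLocallyClosed L ∧ ContinuousOn f L) ∧ s ⊆ ⋃₀ S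

namespace CountablyPiecewiseContinuousOn

variable {f : X → Y} {s t : Set X}

theorem mono (hs : CountablyPiecewiseContinuousOn f s) (hts : t ⊆ s) :
    CountablyPiecewiseContinuousOn f t :=
  let ⟨S, hSc, hS, hsS⟩ := hs
  ⟨S, hSc, hS, hts.trans hsS⟩

theorem of_isLocallyClosed (hs : IsLocallyClosed s) (hf : ContinuousOn f s) :
    CountablyPiecewiseContinuousOn f s :=
  ⟨{s}, countable_singleton s, fun _ hL => hL ▸ ⟨hs, hf⟩, subset_sUnion_of_mem rfl⟩

theorem union (hs : CountablyPiecewiseContinuousOn f s) (ht : CountablyPiecewiseContinuousOn f t) :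
    CountablyPiecewiseContinuousOn f (s ∪ t) := by
  obtain ⟨S, hSc, hS, hsS⟩ := hs
  obtain ⟨T, hTc, hT, htT⟩ := ht
  refine ⟨S ∪ T, hSc.union hTc, fun L hL => hL.elim (hS L) (hT L), ?_⟩
  rw [sUnion_union]
  exact union_subset_union hsS htT

theorem biUnion {ι : Type*} {I : Set ι} (hI : I.Countable) {s : ι → Set X}
    (hs : ∀ i ∈ I, CountablyPiecewiseContinuousOn f (s i)) :
    CountablyPiecewiseContinuousOn f (⋃ i ∈ I, s i) := by
  choose! S hSc hS hsS using hs
  refine ⟨⋃ i ∈ I, S i, hI.biUnion hSc, ?_, ?_⟩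
  · simp only [mem_iUnion]
    rintro L ⟨i, hi, hL⟩
    exact hS i hi L hL
  · exact iUnion₂_subset fun i hi =>
      (hsS i hi).trans (sUnion_mono (subset_biUnion_of_mem hi))

end CountablyPiecewiseContinuousOn

theorem WeaklyDiscontinuous.countablyPiecewiseContinuousOn_univ [HereditarilyLindelofSpace X]
    {f : X → Y} (hf : WeaklyDiscontinuous f) : CountablyPiecewiseContinuousOn f univ := by
  set 𝒱 := {V : Set X | IsOpen V ∧ CountablyPiecewiseContinuousOn f V}
  set W := ⋃₀ 𝒱
  have hWopen : IsOpen W := isOpen_sUnion fun V hV => hV.1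
  have hW : CountablyPiecewiseContinuousOn f W := by
    obtain ⟨𝒯, h𝒯𝒱, h𝒯c, hW𝒯⟩ :=
      (HereditarilyLindelofSpace.isLindelof W).elim_countable_subcover_image (c := id)
        (fun V hV => hV.1) (sUnion_eq_biUnion (s := 𝒱)).subset
    exact (CountablyPiecewiseContinuousOn.biUnion h𝒯c fun V hV => (h𝒯𝒱 hV).2).mono hW𝒯
  refine hW.mono fun x _ => ?_
  by_contra hxW
  obtain ⟨U, -, ⟨y, hyU⟩, ⟨V, hV, rfl⟩, hfU⟩ := hf Wᶜ ⟨x, hxW⟩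
  have hV𝒱 : V ∈ 𝒱 := by
    refine ⟨hV, (hW.union (.of_isLocallyClosed ?_ hfU)).mono fun z hz => ?_⟩
    · exact ⟨V, Wᶜ, hV, hWopen.isClosed_compl, inter_comm _ _⟩
    · by_cases hzW : z ∈ W
      exacts [Or.inl hzW, Or.inr ⟨hzW, hz⟩]
  exact hyU.1 (subset_sUnion_of_mem hV𝒱 hyU.2)

theorem CountablyPiecewiseContinuousOn.exists_polishSpace_continuous_range_eq {P : Type u}
    [TopologicalSpace P] [PolishSpace P] {f : P → Y}
    (hf : CountablyPiecewiseContinuousOn f univ) :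
    ∃ (Q : Type u) (_ : TopologicalSpace Q), PolishSpace Q ∧
      ∃ g : Q → Y, Continuous g ∧ range g = range f := by
  obtain ⟨S, hSc, hS, hcover⟩ := hf
  have := hSc.to_subtype
  have (L : S) : PolishSpace L := (hS L L.2).1.polishSpace
  refine ⟨Σ L : S, (L : Set P), inferInstance, inferInstance, fun q => f q.2,
    continuous_sigma fun L => (hS L L.2).2.domRestrict, ?_⟩
  refine (range_subset_iff.2 fun q => mem_range_self _).antisymm ?_
  rintro _ ⟨p, rfl⟩
  obtain ⟨L, hL, hpL⟩ := hcover (mem_univ p)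
  exact ⟨⟨⟨L, hL⟩, p, hpL⟩, rfl⟩

end

theorem analytic_iff_weaklyDiscontinuous_image_of_polish
    {X : Type u} [TopologicalSpace X] :
    (∃ (P : Type u) (tP : TopologicalSpace P), PolishSpace P ∧
      ∃ g : P → X, Continuous g ∧ Function.Surjective g) ↔
    (∃ (P : Type u) (tP : TopologicalSpace P), PolishSpace P ∧
      ∃ f : P → X, WeaklyDiscontinuous f ∧ Function.Surjective f) := by
  constructor
  · rintro ⟨P, tP, hP, g, hg, hg_surj⟩
    exact ⟨P, tP, hP, g, hg.weaklyDiscontinuous, hg_surj⟩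
  · rintro ⟨P, tP, hP, f, hf, hf_surj⟩
    obtain ⟨Q, tQ, hQ, g, hg, hgf⟩ :=
      hf.countablyPiecewiseContinuousOn_univ.exists_polishSpace_continuous_range_eq
    exact ⟨Q, tQ, hQ, g, hg, range_eq_univ.1 (hgf.trans (range_eq_univ.2 hf_surj))⟩
end

section
/- Let f : X → Y be a surjective weakly discontinuous map between topological spaces. Then nw(Y) ≤ nw(X), hl(Y) ≤ hl(X), and hd(Y) ≤ max{hd(X), hl(X)}, where all three cardinal invariants are taken as the corresponding infimum joined with ℵ₀ (so that each invariant is an infinite cardinal). -/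
open Set Function Topology

universe u

/-- Network weight of a space, joined with `ℵ₀`. -/
noncomputable def networkWeight (X : Type u) [TopologicalSpace X] : Cardinal.{u} :=
  sInf {c : Cardinal.{u} | ∃ N : Set (Set X), Cardinal.mk ↥N = c ∧
    ∀ (x : X) (U : Set X), IsOpen U → x ∈ U → ∃ n ∈ N, x ∈ n ∧ n ⊆ U} ⊔ Cardinal.aleph0

/-- Hereditary Lindelöf number of a space, joined with `ℵ₀`. -/
noncomputable def herLindelofNumber (X : Type u) [TopologicalSpace X] : Cardinal.{u} :=
  sInf {κ : Cardinal.{u} | ∀ (Y : Set X) (𝒰 : Set (Set X)), (∀ U ∈ 𝒰, IsOpen U) →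
    Y ⊆ ⋃₀ 𝒰 → ∃ 𝒱 ⊆ 𝒰, Y ⊆ ⋃₀ 𝒱 ∧ Cardinal.mk ↥𝒱 ≤ κ} ⊔ Cardinal.aleph0

/-- Hereditary density of a space, joined with `ℵ₀`. -/
noncomputable def herDensity (X : Type u) [TopologicalSpace X] : Cardinal.{u} :=
  sInf {κ : Cardinal.{u} | ∀ Y : Set X, ∃ D ⊆ Y, Cardinal.mk ↥D ≤ κ ∧ Y ⊆ closure D} ⊔
    Cardinal.aleph0

/-!
Weak discontinuity lets one exhaust `X` transfinitely: at each stage take a nonempty piece,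
relatively open in what is left, on which `f` is continuous. A point from each piece, together
with the open set cutting out that piece, forms a right-separated family, so there are at most
`hl X` pieces. Networks, subcovers and dense sets of `X`, restricted to a piece, are carried by
the continuous map `f` to the image of that piece, and gluing `hl X` many of them costs
nothing more. Finally `hl X ≤ nw X`.
-/

open Cardinal

theorem Cardinal.mk_iUnion_le_of_le {α ι : Type u} {s : ι → Set α} {κ : Cardinal.{u}}
    (hκ : ℵ₀ ≤ κ) (hι : #ι ≤ κ) (hs : ∀ i, #(s i) ≤ κ) : #(⋃ i, s i) ≤ κ :=
  calc #(⋃ i, s i) ≤ #ι * ⨆ i, #(s i) := mk_iUnion_le s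
    _ ≤ κ * κ := mul_le_mul' hι (ciSup_le' hs)
    _ = κ := mul_eq_self hκ

section Invariants

variable (X : Type u) [TopologicalSpace X]

def IsNetwork (𝒩 : Set (Set X)) : Prop :=
  ∀ (x : X) (U : Set X), IsOpen U → x ∈ U → ∃ n ∈ 𝒩, x ∈ n ∧ n ⊆ U

def IsHerLindelofBound (κ : Cardinal.{u}) : Prop :=
  ∀ (S : Set X) (𝒰 : Set (Set X)), (∀ U ∈ 𝒰, IsOpen U) →
    S ⊆ ⋃₀ 𝒰 → ∃ 𝒱 ⊆ 𝒰, S ⊆ ⋃₀ 𝒱 ∧ #𝒱 ≤ κ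

def IsHerDensityBound (κ : Cardinal.{u}) : Prop :=
  ∀ S : Set X, ∃ D ⊆ S, #D ≤ κ ∧ S ⊆ closure D

variable {X}

theorem aleph0_le_networkWeight : ℵ₀ ≤ networkWeight X := le_sup_right

theorem aleph0_le_herLindelofNumber : ℵ₀ ≤ herLindelofNumber X := le_sup_right

theorem aleph0_le_herDensity : ℵ₀ ≤ herDensity X := le_sup_right

theorem exists_isNetwork_card_le_networkWeight :
    ∃ 𝒩 : Set (Set X), IsNetwork X 𝒩 ∧ #𝒩 ≤ networkWeight X := by
  obtain ⟨𝒩, h𝒩card, h𝒩⟩ := csInf_mem (s := {c | ∃ 𝒩 : Set (Set X), #𝒩 = c ∧ IsNetwork X 𝒩})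
    ⟨_, univ, rfl, fun _ U _ hx => ⟨U, mem_univ U, hx, Subset.rfl⟩⟩
  exact ⟨𝒩, h𝒩, h𝒩card.le.trans le_sup_left⟩

theorem networkWeight_le {𝒩 : Set (Set X)} {κ : Cardinal.{u}} (h𝒩 : IsNetwork X 𝒩)
    (hcard : #𝒩 ≤ κ) (hκ : ℵ₀ ≤ κ) : networkWeight X ≤ κ :=
  sup_le ((csInf_le' (show #𝒩 ∈ {c | ∃ 𝒩 : Set (Set X), #𝒩 = c ∧ IsNetwork X 𝒩} from
    ⟨𝒩, rfl, h𝒩⟩)).trans hcard) hκ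

theorem IsHerLindelofBound.mono {κ κ' : Cardinal.{u}} (h : IsHerLindelofBound X κ)
    (hκ : κ ≤ κ') : IsHerLindelofBound X κ' := fun S 𝒰 hU hS =>
  let ⟨𝒱, h𝒱𝒰, hS𝒱, h𝒱⟩ := h S 𝒰 hU hS
  ⟨𝒱, h𝒱𝒰, hS𝒱, h𝒱.trans hκ⟩

theorem isHerLindelofBound_herLindelofNumber :
    IsHerLindelofBound X (herLindelofNumber X) :=
  IsHerLindelofBound.mono (csInf_mem (s := {κ | IsHerLindelofBound X κ})
    ⟨#(Set X), fun _ 𝒰 _ hS => ⟨𝒰, Subset.rfl, hS, mk_subtype_le _⟩⟩) le_sup_left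

theorem herLindelofNumber_le {κ : Cardinal.{u}} (h : IsHerLindelofBound X κ) (hκ : ℵ₀ ≤ κ) :
    herLindelofNumber X ≤ κ :=
  sup_le (csInf_le' h) hκ

theorem IsHerDensityBound.mono {κ κ' : Cardinal.{u}} (h : IsHerDensityBound X κ)
    (hκ : κ ≤ κ') : IsHerDensityBound X κ' := fun S =>
  let ⟨D, hDS, hD, hSD⟩ := h S
  ⟨D, hDS, hD.trans hκ, hSD⟩

theorem isHerDensityBound_herDensity : IsHerDensityBound X (herDensity X) :=
  IsHerDensityBound.mono (csInf_mem (s := {κ | IsHerDensityBound X κ})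
    ⟨#X, fun S => ⟨S, Subset.rfl, mk_subtype_le _, subset_closure⟩⟩) le_sup_left

theorem herDensity_le {κ : Cardinal.{u}} (h : IsHerDensityBound X κ) (hκ : ℵ₀ ≤ κ) :
    herDensity X ≤ κ :=
  sup_le (csInf_le' h) hκ

theorem IsNetwork.isHerLindelofBound {𝒩 : Set (Set X)} (h𝒩 : IsNetwork X 𝒩) :
    IsHerLindelofBound X #𝒩 := by
  intro S 𝒰 hU hS
  have hchoice : ∀ n : {n : 𝒩 // ∃ U ∈ 𝒰, n.1 ⊆ U}, ∃ U ∈ 𝒰, n.1.1 ⊆ U := Subtype.prop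
  choose g hg𝒰 hng using hchoice
  refine ⟨range g, range_subset_iff.2 hg𝒰, fun x hx => ?_, mk_range_le.trans (mk_subtype_le _)⟩
  obtain ⟨U, hU𝒰, hxU⟩ := hS hx
  obtain ⟨n, hn, hxn, hnU⟩ := h𝒩 x U (hU U hU𝒰) hxU
  exact ⟨_, mem_range_self ⟨⟨n, hn⟩, U, hU𝒰, hnU⟩, hng _ hxn⟩

theorem herLindelofNumber_le_networkWeight : herLindelofNumber X ≤ networkWeight X := by
  obtain ⟨𝒩, h𝒩, hcard⟩ := exists_isNetwork_card_le_networkWeight (X := X)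
  exact herLindelofNumber_le (h𝒩.isHerLindelofBound.mono hcard) aleph0_le_networkWeight

theorem IsHerLindelofBound.exists_subfamily {κ : Cardinal.{u}} (h : IsHerLindelofBound X κ)
    {ι : Type u} {U : ι → Set X} (hU : ∀ i, IsOpen (U i)) {s : Set ι} {S : Set X}
    (hS : S ⊆ ⋃ i ∈ s, U i) : ∃ t ⊆ s, #t ≤ κ ∧ S ⊆ ⋃ i ∈ t, U i := by
  obtain ⟨𝒱, h𝒱U, hS𝒱, h𝒱⟩ := h S (U '' s) (forall_mem_image.2 fun i _ => hU i)
    (by rwa [sUnion_image])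
  choose j hjs hjU using fun W : 𝒱 => h𝒱U W.2
  refine ⟨range j, range_subset_iff.2 hjs, mk_range_le.trans h𝒱, fun x hx => ?_⟩
  obtain ⟨W, hW𝒱, hxW⟩ := hS𝒱 hx
  exact mem_biUnion (mem_range_self ⟨W, hW𝒱⟩) (by rwa [hjU])

end Invariants

theorem IsHerLindelofBound.card_le_of_rightSeparated {X : Type u} [TopologicalSpace X]
    {κ : Cardinal.{u}} (hX : IsHerLindelofBound X κ) (hκ : ℵ₀ ≤ κ) {ι : Type u} {α : Type*}
    [LinearOrder α] [WellFoundedLT α] {v : ι → α} (hv : Injective v) {x : ι → X}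
    {U : ι → Set X} (hU : ∀ i, IsOpen (U i)) (hxU : ∀ i, x i ∈ U i)
    (hsep : ∀ i j, v i < v j → x j ∉ U i) : #ι ≤ κ := by
  have card_le_of_initial : ∀ s : Set ι, (∀ j ∈ s, #{i | v i ≤ v j} ≤ κ) → #s ≤ κ := by
    intro s hs
    obtain ⟨t, hts, ht, hcov⟩ := hX.exists_subfamily hU (s := s) (S := x '' s)
      (image_subset_iff.2 fun i hi => mem_biUnion hi (hxU i))
    have hdom : s ⊆ ⋃ j : t, {i | v i ≤ v j} := fun i hi => by
      obtain ⟨j, hj, hxj⟩ := mem_iUnion₂.1 (hcov (mem_image_of_mem x hi))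
      exact mem_iUnion.2 ⟨⟨j, hj⟩, not_lt.1 fun h => hsep j i h hxj⟩
    exact (mk_le_mk_of_subset hdom).trans
      (mk_iUnion_le_of_le hκ ht fun j => hs j (hts j.2))
  have card_initial_le : ∀ j, #{i | v i ≤ v j} ≤ κ := fun j => by
    induction j using (InvImage.wf v wellFounded_lt).induction with
    | _ j ih =>
    have hsplit : {i | v i ≤ v j} = insert j {i | v i < v j} := by
      ext i; simp [le_iff_lt_or_eq, hv.eq_iff, or_comm]
    calc #{i | v i ≤ v j} ≤ #{i | v i < v j} + 1 := hsplit ▸ mk_insert_le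
      _ ≤ κ + κ := add_le_add (card_le_of_initial _ ih) (one_le_aleph0.trans hκ)
      _ = κ := add_eq_self hκ
  simpa using card_le_of_initial univ fun j _ => card_initial_le j

section Exhaustion

variable {X : Type u} (V : Set X → Set X)

def exhaustion (o : Ordinal.{u}) : Set X :=
  {x | ∀ o' < o, x ∉ exhaustion o'} ∩ V {x | ∀ o' < o, x ∉ exhaustion o'}
termination_by o

def remainder (o : Ordinal.{u}) : Set X := {x | ∀ o' < o, x ∉ exhaustion V o'}

theorem exhaustion_eq (o : Ordinal.{u}) :
    exhaustion V o = remainder V o ∩ V (remainder V o) := by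
  rw [exhaustion]; rfl

theorem exhaustion_subset_remainder (o : Ordinal.{u}) : exhaustion V o ⊆ remainder V o := by
  rw [exhaustion_eq]; exact inter_subset_left

theorem iUnion_exhaustion (hV : ∀ A, A.Nonempty → (A ∩ V A).Nonempty) :
    ⋃ o, exhaustion V o = Set.univ := by
  by_contra hne
  obtain ⟨x, hx⟩ := (ne_univ_iff_exists_notMem _).1 hne
  have hrem : ∀ o, x ∈ remainder V o := fun o o' _ hxo' => hx (mem_iUnion_of_mem o' hxo')
  have hnonempty : ∀ o, (exhaustion V o).Nonempty := fun o => by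
    rw [exhaustion_eq]; exact hV _ ⟨x, hrem o⟩
  choose y hy using hnonempty
  -- the stages are pairwise disjoint, so `y` would inject `Ordinal.{u}` into `X`
  refine not_injective_of_ordinal y fun o o' hoo' => ?_
  by_contra hne'
  wlog hlt : o < o' generalizing o o'
  · exact this o' o hoo'.symm (Ne.symm hne') (lt_of_le_of_ne (not_lt.1 hlt) (Ne.symm hne'))
  exact exhaustion_subset_remainder V o' (hy o') o hlt (hoo' ▸ hy o)

end Exhaustion

theorem card_nonempty_exhaustion_le {X : Type u} [TopologicalSpace X] {V : Set X → Set X}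
    (hV : ∀ A, IsOpen (V A)) {κ : Cardinal.{u}} (hX : IsHerLindelofBound X κ) (hκ : ℵ₀ ≤ κ) :
    #{P ∈ range (exhaustion V) | P.Nonempty} ≤ κ := by
  set 𝒞 := {P ∈ range (exhaustion V) | P.Nonempty}
  let o : 𝒞 → Ordinal.{u} := fun P => rangeSplitting (exhaustion V) ⟨P, P.2.1⟩
  have ho : ∀ P, exhaustion V (o P) = P := fun P => apply_rangeSplitting _ _
  choose x hx using fun P : 𝒞 => P.2.2
  have hxo : ∀ P, x P ∈ exhaustion V (o P) := fun P => by rw [ho]; exact hx P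
  refine hX.card_le_of_rightSeparated hκ (v := o) (U := fun P => V (remainder V (o P)))
    (fun P Q h => Subtype.ext (by rw [← ho P, ← ho Q, h])) (fun P => hV _)
    (fun P => (exhaustion_eq V _ ▸ hxo P).2) fun P Q hlt hxQ => ?_
  have hQ : x Q ∈ remainder V (o Q) := exhaustion_subset_remainder V _ (hxo Q)
  -- `x Q` survived stage `o P`, so it cannot lie in the open set selected there
  exact hQ (o P) hlt (by rw [exhaustion_eq]; exact ⟨fun o' ho' => hQ o' (ho'.trans hlt), hxQ⟩)

namespace WeaklyDiscontinuous

variable {X Y : Type u} [TopologicalSpace X] [TopologicalSpace Y] {f : X → Y}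

theorem exists_open_selector (hf : WeaklyDiscontinuous f) :
    ∃ V : Set X → Set X, (∀ A, IsOpen (V A)) ∧ (∀ A, A.Nonempty → (A ∩ V A).Nonempty) ∧
      ∀ A, ContinuousOn f (A ∩ V A) := by
  have hselect : ∀ A : Set X, ∃ W, IsOpen W ∧ (A.Nonempty → (A ∩ W).Nonempty) ∧
      ContinuousOn f (A ∩ W) := fun A => by
    by_cases hA : A.Nonempty
    · obtain ⟨-, -, hU, ⟨W, hW, rfl⟩, hcont⟩ := hf A hA
      exact ⟨W, hW, fun _ => hU, hcont⟩
    · exact ⟨∅, isOpen_empty, fun h => absurd h hA, by simp⟩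
  choose V hVopen hVne hVcont using hselect
  exact ⟨V, hVopen, hVne, hVcont⟩

theorem exists_continuousOn_cover (hf : WeaklyDiscontinuous f) :
    ∃ 𝒞 : Set (Set X), ⋃₀ 𝒞 = Set.univ ∧ (∀ P ∈ 𝒞, ContinuousOn f P) ∧
      #𝒞 ≤ herLindelofNumber X := by
  obtain ⟨V, hVopen, hVne, hVcont⟩ := hf.exists_open_selector
  refine ⟨{P ∈ range (exhaustion V) | P.Nonempty}, eq_univ_of_forall fun x => ?_, ?_,
    card_nonempty_exhaustion_le hVopen isHerLindelofBound_herLindelofNumber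
      aleph0_le_herLindelofNumber⟩
  · obtain ⟨o, hxo⟩ := mem_iUnion.1 (iUnion_exhaustion V hVne ▸ mem_univ x)
    exact ⟨_, ⟨mem_range_self o, x, hxo⟩, hxo⟩
  · rintro _ ⟨⟨o, rfl⟩, -⟩
    rw [exhaustion_eq]
    exact hVcont _

end WeaklyDiscontinuous

section ContinuousOnCover

variable {X Y : Type u} [TopologicalSpace X] [TopologicalSpace Y] {f : X → Y}
  {𝒞 : Set (Set X)}

theorem IsNetwork.image2_continuousOn {𝒩 : Set (Set X)} (h𝒩 : IsNetwork X 𝒩)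
    (hcover : ∀ y, ∃ P ∈ 𝒞, y ∈ f '' P) (hcont : ∀ P ∈ 𝒞, ContinuousOn f P) :
    IsNetwork Y (image2 (fun n P => f '' (n ∩ P)) 𝒩 𝒞) := by
  intro y W hW hyW
  obtain ⟨P, hP, x, hxP, rfl⟩ := hcover y
  obtain ⟨O, hO, hxO, hOP⟩ := mem_nhdsWithin.1 (hcont P hP x hxP (hW.mem_nhds hyW))
  obtain ⟨n, hn, hxn, hnO⟩ := h𝒩 x O hO hxO
  exact ⟨_, mem_image2_of_mem hn hP, mem_image_of_mem f ⟨hxn, hxP⟩,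
    image_subset_iff.2 fun z hz => hOP ⟨hnO hz.1, hz.2⟩⟩

theorem networkWeight_le_of_continuousOn_cover (hcover : ∀ y, ∃ P ∈ 𝒞, y ∈ f '' P)
    (hcont : ∀ P ∈ 𝒞, ContinuousOn f P) : networkWeight Y ≤ #𝒞 ⊔ networkWeight X := by
  obtain ⟨𝒩, h𝒩, hcard⟩ := exists_isNetwork_card_le_networkWeight (X := X)
  have hκ : ℵ₀ ≤ #𝒞 ⊔ networkWeight X := aleph0_le_networkWeight.trans le_sup_right
  refine networkWeight_le (h𝒩.image2_continuousOn hcover hcont) ?_ hκ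
  calc #(image2 _ 𝒩 𝒞) ≤ #𝒩 * #𝒞 := mk_image2_le
    _ ≤ (#𝒞 ⊔ networkWeight X) * (#𝒞 ⊔ networkWeight X) :=
      mul_le_mul' (hcard.trans le_sup_right) le_sup_left
    _ = #𝒞 ⊔ networkWeight X := mul_eq_self hκ

theorem IsHerLindelofBound.exists_subcover_image {κ : Cardinal.{u}}
    (hX : IsHerLindelofBound X κ) {P : Set X} (hP : ContinuousOn f P) {Z : Set Y}
    {𝒰 : Set (Set Y)} (h𝒰 : ∀ U ∈ 𝒰, IsOpen U) (hZ : Z ⊆ ⋃₀ 𝒰) :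
    ∃ 𝒱 ⊆ 𝒰, Z ∩ f '' P ⊆ ⋃₀ 𝒱 ∧ #𝒱 ≤ κ := by
  choose W hWopen hW using fun U : 𝒰 => continuousOn_iff'.1 hP U (h𝒰 U U.2)
  obtain ⟨t, -, ht, hcov⟩ := hX.exists_subfamily hWopen (s := Set.univ) (S := P ∩ f ⁻¹' Z)
    fun x hx => by
      obtain ⟨U, hU, hfx⟩ := hZ hx.2
      have hxU : x ∈ f ⁻¹' U ∩ P := ⟨hfx, hx.1⟩
      rw [hW ⟨U, hU⟩] at hxU
      exact mem_biUnion (mem_univ _) hxU.1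
  refine ⟨Subtype.val '' t, Subtype.coe_image_subset _ _, ?_, mk_image_le.trans ht⟩
  rintro _ ⟨hZ, x, hxP, rfl⟩
  obtain ⟨U, hUt, hxU⟩ := mem_iUnion₂.1 (hcov ⟨hxP, hZ⟩)
  have hxU' : x ∈ W U ∩ P := ⟨hxU, hxP⟩
  rw [← hW] at hxU'
  exact ⟨U, mem_image_of_mem _ hUt, hxU'.1⟩

theorem IsHerLindelofBound.of_continuousOn_cover {κ : Cardinal.{u}}
    (hX : IsHerLindelofBound X κ) (hκ : ℵ₀ ≤ κ) (h𝒞 : #𝒞 ≤ κ)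
    (hcover : ∀ y, ∃ P ∈ 𝒞, y ∈ f '' P) (hcont : ∀ P ∈ 𝒞, ContinuousOn f P) :
    IsHerLindelofBound Y κ := by
  intro Z 𝒰 h𝒰 hZ
  choose 𝒱 h𝒱𝒰 hZ𝒱 h𝒱 using fun P : 𝒞 => hX.exists_subcover_image (hcont P P.2) h𝒰 hZ
  refine ⟨⋃ P, 𝒱 P, iUnion_subset h𝒱𝒰, fun y hy => ?_, mk_iUnion_le_of_le hκ h𝒞 h𝒱⟩
  obtain ⟨P, hP, hyP⟩ := hcover y
  exact sUnion_mono (subset_iUnion 𝒱 ⟨P, hP⟩) (hZ𝒱 ⟨P, hP⟩ ⟨hy, hyP⟩)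

theorem herLindelofNumber_le_of_continuousOn_cover (hcover : ∀ y, ∃ P ∈ 𝒞, y ∈ f '' P)
    (hcont : ∀ P ∈ 𝒞, ContinuousOn f P) :
    herLindelofNumber Y ≤ #𝒞 ⊔ herLindelofNumber X :=
  have hκ : ℵ₀ ≤ #𝒞 ⊔ herLindelofNumber X := aleph0_le_herLindelofNumber.trans le_sup_right
  herLindelofNumber_le ((isHerLindelofBound_herLindelofNumber.mono le_sup_right)
    |>.of_continuousOn_cover hκ le_sup_left hcover hcont) hκ

theorem IsHerDensityBound.exists_dense_image {κ : Cardinal.{u}} (hX : IsHerDensityBound X κ)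
    {P : Set X} (hP : ContinuousOn f P) (Z : Set Y) :
    ∃ D ⊆ Z, #D ≤ κ ∧ Z ∩ f '' P ⊆ closure D := by
  obtain ⟨D, hDsub, hD, hdense⟩ := hX (P ∩ f ⁻¹' Z)
  refine ⟨f '' D, image_subset_iff.2 fun x hx => (hDsub hx).2, mk_image_le.trans hD, ?_⟩
  rintro _ ⟨hZ, x, hxP, rfl⟩
  exact ((hP x hxP).mono (hDsub.trans inter_subset_left)).mem_closure_image (hdense ⟨hxP, hZ⟩)

theorem IsHerDensityBound.of_continuousOn_cover {κ : Cardinal.{u}}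
    (hX : IsHerDensityBound X κ) (hκ : ℵ₀ ≤ κ) (h𝒞 : #𝒞 ≤ κ)
    (hcover : ∀ y, ∃ P ∈ 𝒞, y ∈ f '' P) (hcont : ∀ P ∈ 𝒞, ContinuousOn f P) :
    IsHerDensityBound Y κ := by
  intro Z
  choose D hDZ hD hZD using fun P : 𝒞 => hX.exists_dense_image (hcont P P.2) Z
  refine ⟨⋃ P, D P, iUnion_subset hDZ, mk_iUnion_le_of_le hκ h𝒞 hD, fun y hy => ?_⟩
  obtain ⟨P, hP, hyP⟩ := hcover y
  exact closure_mono (subset_iUnion D ⟨P, hP⟩) (hZD ⟨P, hP⟩ ⟨hy, hyP⟩)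

theorem herDensity_le_of_continuousOn_cover (hcover : ∀ y, ∃ P ∈ 𝒞, y ∈ f '' P)
    (hcont : ∀ P ∈ 𝒞, ContinuousOn f P) : herDensity Y ≤ #𝒞 ⊔ herDensity X :=
  have hκ : ℵ₀ ≤ #𝒞 ⊔ herDensity X := aleph0_le_herDensity.trans le_sup_right
  herDensity_le ((isHerDensityBound_herDensity.mono le_sup_right)
    |>.of_continuousOn_cover hκ le_sup_left hcover hcont) hκ

end ContinuousOnCover

theorem cardinal_invariants_of_weaklyDiscontinuous_image
    {X Y : Type u} [TopologicalSpace X] [TopologicalSpace Y]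
    (f : X → Y) (hsurj : Function.Surjective f) (hwd : WeaklyDiscontinuous f) :
    networkWeight Y ≤ networkWeight X ∧
    herLindelofNumber Y ≤ herLindelofNumber X ∧
    herDensity Y ≤ herDensity X ⊔ herLindelofNumber X := by
  obtain ⟨𝒞, h𝒞, hcont, hcard⟩ := hwd.exists_continuousOn_cover
  have hcover : ∀ y, ∃ P ∈ 𝒞, y ∈ f '' P := fun y => by
    obtain ⟨x, rfl⟩ := hsurj y
    obtain ⟨P, hP, hxP⟩ := mem_sUnion.1 (h𝒞 ▸ mem_univ x)
    exact ⟨P, hP, mem_image_of_mem f hxP⟩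
  refine ⟨?_, ?_, ?_⟩
  · exact (networkWeight_le_of_continuousOn_cover hcover hcont).trans
      (sup_le (hcard.trans herLindelofNumber_le_networkWeight) le_rfl)
  · exact (herLindelofNumber_le_of_continuousOn_cover hcover hcont).trans (sup_le hcard le_rfl)
  · exact (herDensity_le_of_continuousOn_cover hcover hcont).trans
      (sup_le (hcard.trans le_sup_right) le_sup_left)
end

section
/- Let X and Y be topological spaces such that X is homeomorphic to a closed subspace of Y and Y is homeomorphic to a closed subspace of X. Then X and Y are weakly homeomorphic. -/
open Set Function Topology

/-!
Given closed embeddings `f : X → Y` and `g : Y → X`, run the Schröder–Bernstein construction: the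
sets of points with at least `n` ancestors under alternately `g` and `f` form a decreasing chain of
closed sets, and the resulting bijection is `f` on the points whose ancestry stops in `X` and `g⁻¹`
elsewhere, so it and its inverse are continuous on every layer of the chain and on its
intersection. For a nonempty `A`, removing from `A` the first set of the chain that does not
contain it leaves a relatively open piece lying in a single layer.
-/

theorem Antitone.disjoint_sdiff_succ {α : Type*} {F : ℕ → Set α} (hF : Antitone F) {m n : ℕ}
    (hmn : m ≠ n) : Disjoint (F m \ F (m + 1)) (F n \ F (n + 1)) := by
  wlog hlt : m < n generalizing m n
  · exact (this hmn.symm (hmn.lt_or_gt.resolve_left hlt)).symm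
  exact disjoint_left.mpr fun x hxm hxn => hxm.2 (hF hlt hxn.1)

theorem Topology.IsInducing.continuousOn_of_leftInvOn {X Y : Type*} [TopologicalSpace X]
    [TopologicalSpace Y] {g : Y → X} {h : X → Y} {s : Set X} (hg : IsInducing g)
    (hgh : LeftInvOn g h s) : ContinuousOn h s :=
  hg.continuousOn_iff.mpr (continuousOn_id.congr hgh)

section WeaklyDiscontinuous

variable {X Y : Type*} [TopologicalSpace X] [TopologicalSpace Y]

theorem weaklyDiscontinuous_of_closed_chain {F : ℕ → Set X} {h : X → Y}
    (hF : ∀ n, IsClosed (F n)) (h0 : F 0 = univ)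
    (hlayer : ∀ n, ContinuousOn h (F n \ F (n + 1))) (hlim : ContinuousOn h (⋂ n, F n)) :
    WeaklyDiscontinuous h := by
  intro A hA
  by_cases hall : ∀ n, A ⊆ F n
  · exact ⟨A, Subset.rfl, hA, ⟨univ, isOpen_univ, (inter_univ A).symm⟩,
      hlim.mono (subset_iInter hall)⟩
  obtain ⟨m, hAm, hAm'⟩ : ∃ m, A ⊆ F m ∧ ¬A ⊆ F (m + 1) := by
    by_contra! hstep
    exact hall fun n => Nat.rec (h0 ▸ subset_univ A) (fun m ih => hstep m ih) n
  obtain ⟨x, hxA, hxF⟩ := not_subset.mp hAm'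
  exact ⟨A ∩ (F (m + 1))ᶜ, inter_subset_left, ⟨x, hxA, hxF⟩,
    ⟨_, (hF (m + 1)).isOpen_compl, rfl⟩, (hlayer m).mono fun y hy => ⟨hAm hy.1, hy.2⟩⟩

theorem weaklyDiscontinuous_of_continuousOn_iUnion_layers {F : ℕ → Set X} {h : X → Y}
    (hanti : Antitone F) (hF : ∀ n, IsClosed (F n)) (h0 : F 0 = univ) {ι : Type*} (σ : ι → ℕ)
    (hS : ContinuousOn h (⋃ i, F (σ i) \ F (σ i + 1)))
    (hSc : ContinuousOn h (⋃ i, F (σ i) \ F (σ i + 1))ᶜ) :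
    WeaklyDiscontinuous h := by
  refine weaklyDiscontinuous_of_closed_chain hF h0 (fun n => ?_) (hSc.mono ?_)
  · by_cases hn : n ∈ range σ
    · obtain ⟨i, rfl⟩ := hn
      exact hS.mono (subset_iUnion (fun i => F (σ i) \ F (σ i + 1)) i)
    · refine hSc.mono fun x hx hxS => ?_
      obtain ⟨i, hi⟩ := mem_iUnion.mp hxS
      exact disjoint_left.mp (hanti.disjoint_sdiff_succ fun h => hn ⟨i, h⟩) hi hx
  · intro x hx hxS
    obtain ⟨i, hi⟩ := mem_iUnion.mp hxS
    exact hi.2 (mem_iInter.mp hx _)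

end WeaklyDiscontinuous

section SchroederBernstein

variable {X Y : Type*} {f : X → Y} {g : Y → X}

/-- `(alternatingImages f g n).1` is `(g ∘ f ∘ g ∘ ⋯) '' univ` with `n` factors, i.e. the points of
`X` with at least `n` ancestors under alternately `g` and `f`; `.2` is the analogue in `Y`. -/
def alternatingImages (f : X → Y) (g : Y → X) : ℕ → Set X × Set Y
  | 0 => (univ, univ)
  | n + 1 => (g '' (alternatingImages f g n).2, f '' (alternatingImages f g n).1)

theorem antitone_alternatingImages : Antitone (alternatingImages f g) := by
  refine antitone_nat_of_succ_le fun n => ?_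
  induction n with
  | zero => exact le_top
  | succ n ih => exact ⟨image_mono ih.2, image_mono ih.1⟩

theorem isClosed_alternatingImages [TopologicalSpace X] [TopologicalSpace Y]
    (hf : IsClosedMap f) (hg : IsClosedMap g) (n : ℕ) :
    IsClosed (alternatingImages f g n).1 ∧ IsClosed (alternatingImages f g n).2 := by
  induction n with
  | zero => exact ⟨isClosed_univ, isClosed_univ⟩
  | succ n ih => exact ⟨hg _ ih.2, hf _ ih.1⟩

/-- The points of `X` whose chain of ancestors under alternately `g` and `f` ends in `X`. -/
def stopsInDomain (f : X → Y) (g : Y → X) : Set X :=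
  ⋃ n, (alternatingImages f g (2 * n)).1 \ (alternatingImages f g (2 * n + 1)).1

theorem image_stopsInDomain (hf : Injective f) :
    f '' stopsInDomain f g =
      ⋃ n, (alternatingImages f g (2 * n + 1)).2 \ (alternatingImages f g (2 * n + 2)).2 := by
  simp only [stopsInDomain, image_iUnion, image_sdiff hf]
  rfl

theorem image_compl_image_stopsInDomain (hf : Injective f) (hg : Injective g) :
    g '' (f '' stopsInDomain f g)ᶜ = (stopsInDomain f g)ᶜ := by
  set A := alternatingImages f g
  have layer_succ_succ :
      ∀ n, (A (n + 2)).1 \ (A (n + 3)).1 = g '' (f '' ((A n).1 \ (A (n + 1)).1)) := fun n => by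
    rw [image_sdiff hf, image_sdiff hg]; rfl
  apply Subset.antisymm
  · rintro _ ⟨y, hy, rfl⟩ hgy
    obtain ⟨n, hn⟩ := mem_iUnion.mp hgy
    cases n with
    | zero => exact hn.2 (mem_image_of_mem g trivial)
    | succ m =>
      rw [show 2 * (m + 1) = 2 * m + 2 by ring, layer_succ_succ, hg.mem_set_image] at hn
      obtain ⟨x, hx, rfl⟩ := hn
      exact hy (mem_image_of_mem f (mem_iUnion.mpr ⟨m, hx⟩))
  · intro x hx
    have hx1 : x ∈ (A 1).1 := by
      by_contra hx1
      exact hx (mem_iUnion.mpr ⟨0, trivial, hx1⟩)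
    obtain ⟨y, -, rfl⟩ := hx1
    refine ⟨y, ?_, rfl⟩
    rintro ⟨x', hx', rfl⟩
    obtain ⟨n, hn⟩ := mem_iUnion.mp hx'
    refine hx (mem_iUnion.mpr ⟨n + 1, ?_⟩)
    rw [show 2 * (n + 1) = 2 * n + 2 by ring, layer_succ_succ]
    exact mem_image_of_mem g (mem_image_of_mem f hn)

theorem exists_equiv_eqOn_of_image_compl (hf : Injective f) (hg : Injective g) {S : Set X}
    (hS : g '' (f '' S)ᶜ = Sᶜ) : ∃ e : X ≃ Y, EqOn e f S ∧ EqOn e.symm g (f '' S)ᶜ := by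
  classical
  let e : X ≃ Y := (Equiv.Set.sumCompl S).symm.trans <|
    (Equiv.sumCongr (Equiv.Set.image f S hf)
      ((Equiv.Set.image g (f '' S)ᶜ hg).trans (Equiv.setCongr hS)).symm).trans
    (Equiv.Set.sumCompl (f '' S))
  refine ⟨e, fun x hx => ?_, fun y hy => ?_⟩
  · simp [e, Equiv.Set.sumCompl_symm_apply_of_mem hx]
  · simp [e, Equiv.Set.sumCompl_symm_apply_of_notMem hy]

end SchroederBernstein

theorem weaklyHomeomorphic_of_isClosedEmbedding {X Y : Type*} [TopologicalSpace X]
    [TopologicalSpace Y] {f : X → Y} {g : Y → X} (hf : IsClosedEmbedding f)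
    (hg : IsClosedEmbedding g) : WeaklyHomeomorphic X Y := by
  set A := alternatingImages f g
  set S := stopsInDomain f g
  have hA (n : ℕ) := isClosed_alternatingImages hf.isClosedMap hg.isClosedMap n
  obtain ⟨e, hef, heg⟩ :=
    exists_equiv_eqOn_of_image_compl hf.injective hg.injective
      (image_compl_image_stopsInDomain hf.injective hg.injective)
  have he_compl : MapsTo e Sᶜ (f '' S)ᶜ := by
    rintro x hx ⟨s, hs, hsx⟩
    exact hx (by rwa [e.injective (hsx.symm.trans (hef hs).symm)])
  refine ⟨e, e.symm, e.left_inv, e.right_inv, ?_, ?_⟩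
  · refine weaklyDiscontinuous_of_continuousOn_iUnion_layers (F := fun n => (A n).1)
      (monotone_fst.comp_antitone antitone_alternatingImages) (fun n => (hA n).1) rfl
      (fun n => 2 * n) (hf.continuous.continuousOn.congr hef) ?_
    exact hg.isInducing.continuousOn_of_leftInvOn fun x hx =>
      (heg (he_compl hx)).symm.trans (e.symm_apply_apply x)
  · refine weaklyDiscontinuous_of_continuousOn_iUnion_layers (F := fun n => (A n).2)
      (monotone_snd.comp_antitone antitone_alternatingImages) (fun n => (hA n).2) rfl
      (fun n => 2 * n + 1) ?_ ?_ <;> rw [← image_stopsInDomain hf.injective]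
    · refine hf.isInducing.continuousOn_of_leftInvOn ?_
      rintro _ ⟨x, hx, rfl⟩
      exact congrArg f (e.symm_apply_eq.mpr (hef hx).symm)
    · exact hg.continuous.continuousOn.congr heg

theorem weaklyHomeomorphic_of_closed_embeddings
    {X : Type*} {Y : Type*} [TopologicalSpace X] [TopologicalSpace Y]
    (hXY : ∃ C : Set Y, IsClosed C ∧ Nonempty (X ≃ₜ ↥C))
    (hYX : ∃ D : Set X, IsClosed D ∧ Nonempty (Y ≃ₜ ↥D)) :
    WeaklyHomeomorphic X Y := by
  obtain ⟨C, hC, ⟨eX⟩⟩ := hXY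
  obtain ⟨D, hD, ⟨eY⟩⟩ := hYX
  exact weaklyHomeomorphic_of_isClosedEmbedding
    (hC.isClosedEmbedding_subtypeVal.comp eX.isClosedEmbedding)
    (hD.isClosedEmbedding_subtypeVal.comp eY.isClosedEmbedding)
end

section
/- Let h : X → Y be a bijection between topological spaces. Suppose {X_α : α ∈ A} is a cover of X by sets each of which is closed or finite such that h|X_α is continuous for every α ∈ A, and {Y_β : β ∈ B} is a cover of Y by sets each of which is closed or finite such that h⁻¹|Y_β is continuous for every β ∈ B. Then there exist a cover {X_i : i ∈ A × B} of X by sets each closed or finite and a cover {Y_i : i ∈ A × B} of Y by sets each closed or finite such that for every i ∈ A × B, h(X_i) = Y_i and the restriction h|X_i : X_i → Y_i is a homeomorphism (with respect to the subspace topologies). -/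
open Set Function Topology

/-
Cut `X` into the pieces `X_a ∩ h⁻¹(Y_b)`. On such a piece `h` is continuous (it lies in `X_a`),
and `h` maps it onto `Y_b ∩ h(X_a)`, on which `h⁻¹` is continuous (it lies in `Y_b`); so `h`
restricts to a homeomorphism of the piece onto its image. A piece is closed or finite: if `X_a`
and `Y_b` are closed it is closed by continuity of `h` on `X_a`, and otherwise it lies in a finite
set or injects into one.
-/

theorem Equiv.image_inter_preimage {X Y : Type*} (e : X ≃ Y) (s : Set X) (t : Set Y) :
    e '' (s ∩ e ⁻¹' t) = t ∩ e.symm ⁻¹' s := by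
  rw [e.image_eq_preimage_symm, preimage_inter, ← preimage_comp, e.self_comp_symm, preimage_id,
    inter_comm]

section

variable {X Y : Type*} [TopologicalSpace X] [TopologicalSpace Y]

theorem ContinuousOn.isClosed_or_finite_inter_preimage {f : X → Y} {s : Set X} {t : Set Y}
    (hf : ContinuousOn f s) (hinj : InjOn f s)
    (hs : IsClosed s ∨ s.Finite) (ht : IsClosed t ∨ t.Finite) :
    IsClosed (s ∩ f ⁻¹' t) ∨ (s ∩ f ⁻¹' t).Finite := by
  rcases hs with hs | hs
  · rcases ht with ht | ht
    · exact .inl (hf.preimage_isClosed_of_isClosed hs ht)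
    · have himage : f '' (s ∩ f ⁻¹' t) ⊆ t := image_subset_iff.2 inter_subset_right
      exact .inr ((ht.subset himage).of_finite_image (hinj.mono inter_subset_left))
  · exact .inr (hs.subset inter_subset_left)

def Equiv.homeomorphImageOfContinuousOn (e : X ≃ Y) {s : Set X} (he : ContinuousOn e s)
    (he_symm : ContinuousOn e.symm (e '' s)) : s ≃ₜ e '' s :=
  PartialHomeomorph.toHomeomorphSourceTarget
    { toPartialEquiv := e.toPartialEquivOfImageEq s (e '' s) rfl
      continuousOn_toFun := he
      continuousOn_invFun := he_symm }

@[simp]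
theorem Equiv.coe_homeomorphImageOfContinuousOn_apply (e : X ≃ Y) {s : Set X}
    (he : ContinuousOn e s) (he_symm : ContinuousOn e.symm (e '' s)) (x : s) :
    (e.homeomorphImageOfContinuousOn he he_symm x : Y) = e x :=
  rfl

end

theorem bijection_decomposes_into_homeomorphisms
    {X Y : Type*} [TopologicalSpace X] [TopologicalSpace Y]
    (h : X → Y) (g : Y → X)
    (hgl : Function.LeftInverse g h) (hgr : Function.RightInverse g h)
    {A B : Type*} (XA : A → Set X) (YB : B → Set Y)
    (hXAcf : ∀ a, IsClosed (XA a) ∨ (XA a).Finite)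
    (hXAcover : (⋃ a, XA a) = Set.univ)
    (hXAcont : ∀ a, ContinuousOn h (XA a))
    (hYBcf : ∀ b, IsClosed (YB b) ∨ (YB b).Finite)
    (hYBcover : (⋃ b, YB b) = Set.univ)
    (hYBcont : ∀ b, ContinuousOn g (YB b)) :
    ∃ (XI : A × B → Set X) (YI : A × B → Set Y),
      (∀ i, IsClosed (XI i) ∨ (XI i).Finite) ∧ (⋃ i, XI i) = Set.univ ∧
      (∀ i, IsClosed (YI i) ∨ (YI i).Finite) ∧ (⋃ i, YI i) = Set.univ ∧
      ∀ i, h '' XI i = YI i ∧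
        ∃ e : ↥(XI i) ≃ₜ ↥(YI i), ∀ x : ↥(XI i), (e x : Y) = h x := by
  let e : X ≃ Y := ⟨h, g, hgl, hgr⟩
  have hcover : (⋃ i : A × B, XA i.1 ∩ h ⁻¹' YB i.2) = univ := by
    simp only [iUnion_prod', ← iUnion_inter_iUnion, ← preimage_iUnion, hXAcover, hYBcover,
      preimage_univ, inter_univ]
  have himage (i : A × B) : h '' (XA i.1 ∩ h ⁻¹' YB i.2) = YB i.2 ∩ g ⁻¹' XA i.1 :=
    e.image_inter_preimage _ _
  refine ⟨fun i => XA i.1 ∩ h ⁻¹' YB i.2, fun i => h '' (XA i.1 ∩ h ⁻¹' YB i.2),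
    fun i => (hXAcont i.1).isClosed_or_finite_inter_preimage hgl.injective.injOn (hXAcf i.1)
      (hYBcf i.2), hcover, fun i => ?_, ?_, fun i => ⟨rfl, ?_⟩⟩
  · dsimp only
    rw [himage]
    exact (hYBcont i.2).isClosed_or_finite_inter_preimage hgr.injective.injOn (hYBcf i.2)
      (hXAcf i.1)
  · rw [← image_iUnion, hcover, image_univ_of_surjective hgr.surjective]
  · have hg : ContinuousOn g (h '' (XA i.1 ∩ h ⁻¹' YB i.2)) :=
      (hYBcont i.2).mono (himage i ▸ inter_subset_left)
    exact ⟨e.homeomorphImageOfContinuousOn ((hXAcont i.1).mono inter_subset_left) hg,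
      e.coe_homeomorphImageOfContinuousOn_apply _ hg⟩
end

section
/- Let X and Y be weakly homeomorphic topological spaces, both Hausdorff and perfectly paracompact. If X is σ-compact, then Y is σ-compact. -/
open Set Function Topology

/-! The open sets `W` of `X` with `f '' W` σ-compact are closed under arbitrary unions, because
every open set of `X` is σ-compact, hence Lindelöf, so that `X` is hereditarily Lindelöf and each
union reduces to a countable one. Let `M` be the largest such set. If `M ≠ X`, weak discontinuity
applied to `Mᶜ` gives an open `V` meeting `Mᶜ` with `f` continuous on the σ-compact set `Mᶜ ∩ V`;
then `M ∪ V` is another such set, contradicting maximality. Hence `f '' X` is σ-compact. -/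

section

variable {X Y : Type*} [TopologicalSpace X] [TopologicalSpace Y]

lemma isSigmaCompact_iUnion_of_isClosed [SigmaCompactSpace X] {C : ℕ → Set X}
    (hC : ∀ n, IsClosed (C n)) : IsSigmaCompact (⋃ n, C n) :=
  isSigmaCompact_iUnion _ fun n => isSigmaCompact_univ.of_isClosed_subset (hC n) (subset_univ _)

lemma IsSigmaCompact.inter_left {s t : Set X} (hs : IsSigmaCompact s) (ht : IsClosed t) :
    IsSigmaCompact (t ∩ s) := by
  obtain ⟨K, hK, rfl⟩ := hs
  exact ⟨fun n => t ∩ K n, fun n => (hK n).inter_left ht, (inter_iUnion t K).symm⟩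

lemma IsSigmaCompact.union {s t : Set X} (hs : IsSigmaCompact s) (ht : IsSigmaCompact t) :
    IsSigmaCompact (s ∪ t) := by
  rw [union_eq_iUnion]
  exact isSigmaCompact_iUnion _ (Bool.forall_bool.2 ⟨ht, hs⟩)

lemma isSigmaCompact_image_sUnion [HereditarilyLindelofSpace X] {f : X → Y} {S : Set (Set X)}
    (hSo : ∀ s ∈ S, IsOpen s) (hS : ∀ s ∈ S, IsSigmaCompact (f '' s)) :
    IsSigmaCompact (f '' ⋃₀ S) := by
  obtain ⟨t, htc, ht⟩ := eq_open_union_countable (fun s : S => (s : Set X)) fun s => hSo s s.2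
  rw [sUnion_eq_iUnion, ← ht, image_iUnion₂]
  exact isSigmaCompact_biUnion htc fun s _ => hS s s.2

theorem WeaklyDiscontinuous.isSigmaCompact_range {f : X → Y} (hf : WeaklyDiscontinuous f)
    (hX : ∀ U : Set X, IsOpen U → IsSigmaCompact U) : IsSigmaCompact (range f) := by
  have : HereditarilyLindelofSpace X :=
    .of_forall_isOpen fun U hU => (hX U hU).isLindelof
  set S := {W : Set X | IsOpen W ∧ IsSigmaCompact (f '' W)}
  set M := ⋃₀ S
  have hMo : IsOpen M := isOpen_sUnion fun W hW => hW.1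
  have hM : IsSigmaCompact (f '' M) :=
    isSigmaCompact_image_sUnion (fun W hW => hW.1) fun W hW => hW.2
  suffices hMuniv : M = univ by rwa [← image_univ, ← hMuniv]
  by_contra hne
  obtain ⟨-, -, ⟨x, hx⟩, ⟨V, hV, rfl⟩, hcont⟩ := hf Mᶜ (nonempty_compl.2 hne)
  have hMV : M ∪ V ∈ S := by
    refine ⟨hMo.union hV, ?_⟩
    have hsplit : M ∪ V = M ∪ (Mᶜ ∩ V) := by
      rw [union_inter_distrib_left, union_compl_self, univ_inter]
    rw [hsplit, image_union]
    exact hM.union (((hX V hV).inter_left hMo.isClosed_compl).image_of_continuousOn hcont)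
  exact hx.1 (subset_sUnion_of_mem hMV (Or.inr hx.2))

end

theorem sigmaCompact_preserved_by_weakHomeomorphism_general
    {X Y : Type*} [TopologicalSpace X] [TopologicalSpace Y]
    (hFX : ∀ U : Set X, IsOpen U →
      ∃ C : ℕ → Set X, (∀ n, IsClosed (C n)) ∧ U = ⋃ n, C n)
    (hwh : WeaklyHomeomorphic X Y) [SigmaCompactSpace X] :
    SigmaCompactSpace Y := by
  obtain ⟨f, g, -, hfg, hf, -⟩ := hwh
  have hopen : ∀ U : Set X, IsOpen U → IsSigmaCompact U := fun U hU => by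
    obtain ⟨C, hC, rfl⟩ := hFX U hU
    exact isSigmaCompact_iUnion_of_isClosed hC
  rw [← isSigmaCompact_univ_iff, ← hfg.surjective.range_eq]
  exact hf.isSigmaCompact_range hopen

theorem sigmaCompact_preserved_by_weakHomeomorphism
    {X Y : Type*} [TopologicalSpace X] [TopologicalSpace Y]
    [T2Space X] [T2Space Y] [ParacompactSpace X] [ParacompactSpace Y]
    (hFX : ∀ U : Set X, IsOpen U →
      ∃ C : ℕ → Set X, (∀ n, IsClosed (C n)) ∧ U = ⋃ n, C n)
    (hFY : ∀ U : Set Y, IsOpen U →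
      ∃ C : ℕ → Set Y, (∀ n, IsClosed (C n)) ∧ U = ⋃ n, C n)
    (hwh : WeaklyHomeomorphic X Y) [SigmaCompactSpace X] :
    SigmaCompactSpace Y :=
  sigmaCompact_preserved_by_weakHomeomorphism_general hFX hwh
end

section
/- Let X and Y be weakly homeomorphic topological spaces, both Hausdorff and perfectly paracompact. If X is σ-Polish, then Y is σ-Polish. -/
open Set Function Topology

/-- A space is σ-Polish if it is a countable union of closed subsets each of which
is Polish in the subspace topology. -/
def IsSigmaPolish (X : Type*) [TopologicalSpace X] : Prop :=
  ∃ C : ℕ → Set X, (∀ n, IsClosed (C n)) ∧ (⋃ n, C n) = Set.univ ∧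
    ∀ n, PolishSpace ↥(C n)

/-!
A σ-Polish space is hereditarily Lindelöf, and its open sets are Fσ because they are so in each
metrizable piece. In a hereditarily Lindelöf space every set `A` is the union of countably many
relatively locally closed pieces on which a given weakly discontinuous map is continuous; hence
hereditary Lindelöfness passes to the image of a weakly discontinuous surjection, and where open
sets are Fσ the pieces can be taken closed. So `Y` is covered by countably many closed sets `K` on
which `f⁻¹` is continuous and `X` by countably many closed Polish sets `M` on which `f` is
continuous; each `K ∩ f (M)` is closed and homeomorphic via `f⁻¹` to the closed subset
`M ∩ f⁻¹(K)` of `M`, hence Polish.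
-/

section

variable {X Y : Type*} [TopologicalSpace X] [TopologicalSpace Y]

def IsFσ (s : Set X) : Prop :=
  ∃ C : ℕ → Set X, (∀ n, IsClosed (C n)) ∧ s = ⋃ n, C n

theorem IsLocallyClosed.isFσ (hF : ∀ U : Set X, IsOpen U → IsFσ U) {s : Set X}
    (hs : IsLocallyClosed s) : IsFσ s := by
  obtain ⟨U, Z, hU, hZ, rfl⟩ := hs
  obtain ⟨C, hC, rfl⟩ := hF U hU
  exact ⟨fun n => C n ∩ Z, fun n => (hC n).inter hZ, iUnion_inter Z C⟩

theorem isSigmaPolish_iff :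
    IsSigmaPolish X ↔ ∃ 𝒞 : Set (Set X), 𝒞.Countable ∧ ⋃₀ 𝒞 = univ ∧
      ∀ C ∈ 𝒞, IsClosed C ∧ PolishSpace C := by
  constructor
  · rintro ⟨C, hC, hcover, hpolish⟩
    exact ⟨range C, countable_range C, by rwa [sUnion_range],
      forall_mem_range.2 fun n => ⟨hC n, hpolish n⟩⟩
  · rintro ⟨𝒞, hc, hcover, h𝒞⟩
    obtain ⟨C, hC⟩ := (hc.insert ∅).exists_eq_range (insert_nonempty ∅ 𝒞)
    have hmem : ∀ n, C n = ∅ ∨ C n ∈ 𝒞 := fun n => by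
      rw [← mem_insert_iff, hC]
      exact mem_range_self n
    refine ⟨C, fun n => ?_, by rw [← sUnion_range, ← hC, sUnion_insert, hcover, empty_union],
      fun n => ?_⟩
    · rcases hmem n with h | h
      · exact h ▸ isClosed_empty
      · exact (h𝒞 _ h).1
    · rcases hmem n with h | h
      · rw [h]; infer_instance
      · exact (h𝒞 _ h).2

namespace IsSigmaPolish

theorem hereditarilyLindelofSpace (hX : IsSigmaPolish X) : HereditarilyLindelofSpace X := by
  obtain ⟨C, -, hcover, hpolish⟩ := hX
  refine ⟨fun s _ => ?_⟩
  rw [← univ_inter s, ← hcover, iUnion_inter]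
  refine isLindelof_iUnion fun n => ?_
  have := hpolish n
  rw [← Subtype.image_preimage_coe]
  exact (HereditarilyLindelofSpace.isLindelof _).image continuous_subtype_val

theorem isFσ_of_isOpen (hX : IsSigmaPolish X) {U : Set X} (hU : IsOpen U) : IsFσ U := by
  obtain ⟨C, hC, hcover, hpolish⟩ := hX
  have hpiece : ∀ n, ∃ F : ℕ → Set X, (∀ k, IsClosed (F k)) ∧ U ∩ C n = ⋃ k, F k := by
    intro n
    have hUn : IsOpen (Subtype.val ⁻¹' U : Set (C n)) := hU.preimage continuous_subtype_val
    let := TopologicalSpace.metrizableSpaceMetric (C n)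
    obtain ⟨F, hF, -, hFU, -⟩ := hUn.exists_iUnion_isClosed
    refine ⟨fun k => Subtype.val '' F k,
      fun k => (hC n).isClosedEmbedding_subtypeVal.isClosedMap _ (hF k), ?_⟩
    rw [← image_iUnion, hFU, Subtype.image_preimage_coe, inter_comm]
  choose F hF hFU using hpiece
  refine ⟨fun m => F m.unpair.1 m.unpair.2, fun m => hF _ _, ?_⟩
  rw [iUnion_unpair, ← inter_univ U, ← hcover, inter_iUnion]
  exact iUnion_congr hFU

end IsSigmaPolish

def continuityPieces (f : X → Y) (A : Set X) : Set (Set X) :=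
  {P | (∃ S, IsLocallyClosed S ∧ P = A ∩ S) ∧ ContinuousOn f P}

section WeaklyDiscontinuous

variable {f : X → Y}

theorem WeaklyDiscontinuous.exists_countable_sUnion_eq [HereditarilyLindelofSpace X]
    (hf : WeaklyDiscontinuous f) (A : Set X) :
    ∃ 𝒞 ⊆ continuityPieces f A, 𝒞.Countable ∧ ⋃₀ 𝒞 = A := by
  set 𝒱 : Set (Set X) :=
    {V | IsOpen V ∧ ∃ 𝒞 ⊆ continuityPieces f A, 𝒞.Countable ∧ A ∩ V ⊆ ⋃₀ 𝒞}
  set W := ⋃₀ 𝒱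
  have hW : IsOpen W := isOpen_sUnion fun V hV => hV.1
  obtain ⟨𝒯, h𝒯𝒱, h𝒯c, h𝒯W⟩ : ∃ 𝒯 ⊆ 𝒱, 𝒯.Countable ∧ W ⊆ ⋃₀ 𝒯 := by
    obtain ⟨t, htc, ht⟩ := (HereditarilyLindelofSpace.isLindelof W).elim_countable_subcover
      (fun V : 𝒱 => (V : Set X)) (fun V => V.2.1) sUnion_eq_iUnion.subset
    refine ⟨Subtype.val '' t, image_subset_iff.2 fun V _ => V.2, htc.image _, ?_⟩
    rwa [sUnion_image]
  choose! 𝒞 h𝒞 h𝒞c h𝒞V using fun V (hV : V ∈ 𝒱) => hV.2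
  set 𝒞W := ⋃ V ∈ 𝒯, 𝒞 V
  have h𝒞W : 𝒞W ⊆ continuityPieces f A := iUnion₂_subset fun V hV => h𝒞 V (h𝒯𝒱 hV)
  have h𝒞Wc : 𝒞W.Countable := h𝒯c.biUnion fun V hV => h𝒞c V (h𝒯𝒱 hV)
  have hAW_cover : A ∩ W ⊆ ⋃₀ 𝒞W := by
    rintro x ⟨hxA, hxW⟩
    obtain ⟨V, hV𝒯, hxV⟩ := h𝒯W hxW
    exact sUnion_mono (subset_biUnion_of_mem hV𝒯) (h𝒞V V (h𝒯𝒱 hV𝒯) ⟨hxA, hxV⟩)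
  -- A point of `A \ W` would have a neighbourhood `V` with `V ∈ 𝒱`, hence `V ⊆ W`.
  have hAW : A ⊆ W := by
    by_contra hAW
    obtain ⟨U, hUA, ⟨x, hxU⟩, ⟨V, hV, rfl⟩, hcont⟩ := hf (A \ W) (sdiff_nonempty.2 hAW)
    have hpiece : (A \ W) ∩ V ∈ continuityPieces f A :=
      ⟨⟨Wᶜ ∩ V, hW.isClosed_compl.isLocallyClosed.inter hV.isLocallyClosed,
        by rw [sdiff_eq, inter_assoc]⟩, hcont⟩
    have hV𝒱 : V ∈ 𝒱 := by
      refine ⟨hV, insert ((A \ W) ∩ V) 𝒞W, insert_subset hpiece h𝒞W, h𝒞Wc.insert _, ?_⟩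
      rintro y ⟨hyA, hyV⟩
      by_cases hyW : y ∈ W
      · exact sUnion_mono (subset_insert _ _) (hAW_cover ⟨hyA, hyW⟩)
      · exact ⟨_, mem_insert _ _, ⟨hyA, hyW⟩, hyV⟩
    exact hxU.1.2 (subset_sUnion_of_mem hV𝒱 hxU.2)
  refine ⟨𝒞W, h𝒞W, h𝒞Wc, (sUnion_subset fun P hP => ?_).antisymm ?_⟩
  · obtain ⟨⟨S, -, rfl⟩, -⟩ := h𝒞W hP
    exact inter_subset_left
  · exact fun x hx => hAW_cover ⟨hx, hAW hx⟩

theorem WeaklyDiscontinuous.hereditarilyLindelofSpace_of_surjective [HereditarilyLindelofSpace X]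
    (hf : WeaklyDiscontinuous f) (hs : Surjective f) : HereditarilyLindelofSpace Y := by
  refine ⟨fun B _ => ?_⟩
  obtain ⟨𝒞, h𝒞, h𝒞c, h𝒞B⟩ := hf.exists_countable_sUnion_eq (f ⁻¹' B)
  rw [← image_preimage_eq B hs, ← h𝒞B, sUnion_eq_biUnion, image_iUnion₂]
  exact h𝒞c.isLindelof_biUnion fun P hP =>
    (HereditarilyLindelofSpace.isLindelof P).image_of_continuousOn (h𝒞 hP).2

theorem WeaklyDiscontinuous.exists_countable_closed_cover [HereditarilyLindelofSpace X]
    (hF : ∀ U : Set X, IsOpen U → IsFσ U) (hf : WeaklyDiscontinuous f) :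
    ∃ 𝒦 : Set (Set X), 𝒦.Countable ∧ ⋃₀ 𝒦 = univ ∧ ∀ K ∈ 𝒦, IsClosed K ∧ ContinuousOn f K := by
  obtain ⟨𝒞, h𝒞, h𝒞c, h𝒞X⟩ := hf.exists_countable_sUnion_eq univ
  have hFσ : ∀ P ∈ 𝒞, IsFσ P := fun P hP => by
    obtain ⟨⟨S, hS, rfl⟩, -⟩ := h𝒞 hP
    rw [univ_inter]
    exact hS.isFσ hF
  choose! G hG hGP using hFσ
  refine ⟨⋃ P ∈ 𝒞, range (G P), h𝒞c.biUnion fun P _ => countable_range _, ?_, ?_⟩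
  · simp only [sUnion_iUnion, sUnion_range]
    rw [← h𝒞X, sUnion_eq_biUnion]
    exact iUnion₂_congr fun P hP => (hGP P hP).symm
  · simp only [mem_iUnion₂, mem_range]
    rintro _ ⟨P, hP, k, rfl⟩
    exact ⟨hG P hP k, (h𝒞 hP).2.mono ((subset_iUnion (G P) k).trans (hGP P hP).superset)⟩

end WeaklyDiscontinuous

theorem PolishSpace.of_isClosed_of_subset {s t : Set X} [PolishSpace t] (hs : IsClosed s)
    (hst : s ⊆ t) : PolishSpace s :=
  (IsClosedEmbedding.mk (IsEmbedding.inclusion hst)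
    (by rw [range_inclusion]; exact hs.preimage continuous_subtype_val)).polishSpace

theorem IsSigmaPolish.exists_countable_polish_cover {f : X → Y} (hX : IsSigmaPolish X)
    (hf : WeaklyDiscontinuous f) :
    ∃ ℳ : Set (Set X), ℳ.Countable ∧ ⋃₀ ℳ = univ ∧
      ∀ M ∈ ℳ, IsClosed M ∧ PolishSpace M ∧ ContinuousOn f M := by
  have := hX.hereditarilyLindelofSpace
  obtain ⟨𝒦, h𝒦c, h𝒦X, h𝒦⟩ := hf.exists_countable_closed_cover fun U hU => hX.isFσ_of_isOpen hU
  obtain ⟨𝒞, h𝒞c, h𝒞X, h𝒞⟩ := isSigmaPolish_iff.1 hX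
  refine ⟨image2 (· ∩ ·) 𝒦 𝒞, h𝒦c.image2 h𝒞c _, sUnion_eq_univ_iff.2 fun x => ?_, ?_⟩
  · obtain ⟨K, hK, hxK⟩ := sUnion_eq_univ_iff.1 h𝒦X x
    obtain ⟨C, hC, hxC⟩ := sUnion_eq_univ_iff.1 h𝒞X x
    exact ⟨_, mem_image2_of_mem hK hC, hxK, hxC⟩
  · rintro _ ⟨K, hK, C, hC, rfl⟩
    have := (h𝒞 C hC).2
    have hKC := (h𝒦 K hK).1.inter (h𝒞 C hC).1
    exact ⟨hKC, .of_isClosed_of_subset hKC inter_subset_right, (h𝒦 K hK).2.mono inter_subset_left⟩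

theorem polishSpace_inter_preimage {f : X → Y} {g : Y → X} (hgf : LeftInverse g f)
    (hfg : RightInverse g f) {K : Set Y} {M : Set X} [PolishSpace M] (hK : IsClosed K)
    (hgK : ContinuousOn g K) (hfM : ContinuousOn f M) : PolishSpace ↥(K ∩ g ⁻¹' M) := by
  have : PolishSpace {x : M | f x ∈ K} := (hK.preimage hfM.domRestrict).polishSpace
  have hgy : ∀ y : ↥(K ∩ g ⁻¹' M), f (g y) ∈ K := fun y => by rw [hfg y]; exact y.2.1
  have hfx : ∀ x : {x : M | f x ∈ K}, f x ∈ K ∩ g ⁻¹' M := fun x =>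
    ⟨x.2, by rw [mem_preimage, hgf]; exact x.1.2⟩
  let e : ↥(K ∩ g ⁻¹' M) ≃ₜ {x : M | f x ∈ K} :=
    { toFun y := ⟨⟨g y, y.2.2⟩, hgy y⟩
      invFun x := ⟨f x, hfx x⟩
      left_inv y := Subtype.ext (hfg y)
      right_inv x := Subtype.ext (Subtype.ext (hgf x))
      continuous_toFun :=
        (((hgK.mono inter_subset_left).domRestrict).subtype_mk fun y => y.2.2).subtype_mk hgy
      continuous_invFun := (hfM.domRestrict.comp continuous_subtype_val).subtype_mk hfx }
  exact e.isClosedEmbedding.polishSpace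

end

theorem sigmaPolish_preserved_by_weakHomeomorphism_general
    {X Y : Type*} [TopologicalSpace X] [TopologicalSpace Y]
    (hFY : ∀ U : Set Y, IsOpen U →
      ∃ C : ℕ → Set Y, (∀ n, IsClosed (C n)) ∧ U = ⋃ n, C n)
    (hwh : WeaklyHomeomorphic X Y) (hX : IsSigmaPolish X) :
    IsSigmaPolish Y := by
  obtain ⟨f, g, hgf, hfg, hf, hg⟩ := hwh
  have := hX.hereditarilyLindelofSpace
  have := hf.hereditarilyLindelofSpace_of_surjective hfg.surjective
  obtain ⟨𝒦, h𝒦c, h𝒦Y, h𝒦⟩ := hg.exists_countable_closed_cover hFY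
  obtain ⟨ℳ, hℳc, hℳX, hℳ⟩ := hX.exists_countable_polish_cover hf
  refine isSigmaPolish_iff.2 ⟨image2 (fun K M => K ∩ g ⁻¹' M) 𝒦 ℳ, h𝒦c.image2 hℳc _,
    sUnion_eq_univ_iff.2 fun y => ?_, ?_⟩
  · obtain ⟨K, hK, hyK⟩ := sUnion_eq_univ_iff.1 h𝒦Y y
    obtain ⟨M, hM, hgyM⟩ := sUnion_eq_univ_iff.1 hℳX (g y)
    exact ⟨_, mem_image2_of_mem hK hM, hyK, hgyM⟩
  · rintro _ ⟨K, hK, M, hM, rfl⟩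
    obtain ⟨hKc, hgK⟩ := h𝒦 K hK
    obtain ⟨hMc, hMp, hfM⟩ := hℳ M hM
    exact ⟨hgK.preimage_isClosed_of_isClosed hKc hMc,
      polishSpace_inter_preimage hgf hfg hKc hgK hfM⟩

theorem sigmaPolish_preserved_by_weakHomeomorphism
    {X Y : Type*} [TopologicalSpace X] [TopologicalSpace Y]
    [T2Space X] [T2Space Y] [ParacompactSpace X] [ParacompactSpace Y]
    (hFX : ∀ U : Set X, IsOpen U →
      ∃ C : ℕ → Set X, (∀ n, IsClosed (C n)) ∧ U = ⋃ n, C n)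
    (hFY : ∀ U : Set Y, IsOpen U →
      ∃ C : ℕ → Set Y, (∀ n, IsClosed (C n)) ∧ U = ⋃ n, C n)
    (hwh : WeaklyHomeomorphic X Y) (hX : IsSigmaPolish X) :
    IsSigmaPolish Y :=
  sigmaPolish_preserved_by_weakHomeomorphism_general hFY hwh hX
end

section
/- Let h : X → Y be a weak homeomorphism between topological spaces. Then every nonempty closed subset A ⊆ X contains a nonempty subset U that is open in the subspace topology of A, such that the image h(U) is open in its closure in Y, and the restriction h|U : U → h(U) is a homeomorphism with respect to the subspace topologies. -/
/-!
Shrink `A` to a relatively open `U₁` on which `h` is continuous, then shrink the closure of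
`h '' U₁` to a relatively open `W` on which `g` is continuous. Since `h '' U₁` is dense in `W`
and `g` sends it into the closed set `A`, `g` sends all of `W` into `A`. The points of `U₁` that
`h` sends into `W` then form the required `U`: it is relatively open in `A` by continuity of `h`,
and `h '' U = W ∩ g ⁻¹' U₁` is relatively open in `W` by continuity of `g`, hence locally closed.
-/

open Set Function Topology

section

variable {X Y : Type*} [TopologicalSpace X] [TopologicalSpace Y]

theorem ContinuousOn.mapsTo_closure_inter_of_isOpen {f : Y → X} {T V : Set Y} {A : Set X}
    (hf : ContinuousOn f (closure T ∩ V)) (hV : IsOpen V) (hA : IsClosed A)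
    (hT : MapsTo f T A) : MapsTo f (closure T ∩ V) A := by
  intro y hy
  have hy_closure : y ∈ closure (V ∩ T) := hV.inter_closure ⟨hy.2, hy.1⟩
  have hVT : V ∩ T ⊆ closure T ∩ V := fun z hz => ⟨subset_closure hz.2, hz.1⟩
  exact closure_minimal (image_subset_iff.2 fun z hz => hT hz.2) hA
    (((hf y hy).mono hVT).mem_closure_image hy_closure)

theorem ContinuousOn.exists_isOpen_inter_preimage_inter {f : X → Y} {s : Set X} {t V : Set Y}
    (hf : ContinuousOn f s) (hst : MapsTo f s t) (hV : IsOpen V) :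
    ∃ V' : Set X, IsOpen V' ∧ s ∩ f ⁻¹' (t ∩ V) = s ∩ V' := by
  obtain ⟨V', hV', hfV⟩ := continuousOn_iff'.mp hf V hV
  refine ⟨V', hV', ?_⟩
  rw [preimage_inter, ← inter_assoc, inter_eq_left.2 hst.subset_preimage, inter_comm, hfV,
    inter_comm]

theorem IsLocallyClosed.exists_isOpen_eq_closure_inter {s : Set X} (hs : IsLocallyClosed s) :
    ∃ W : Set X, IsOpen W ∧ s = closure s ∩ W :=
  ⟨coborder s, hs.isOpen_coborder, closure_inter_coborder.symm⟩

theorem Set.LeftInvOn.exists_homeomorph_image {f : X → Y} {g : Y → X} {s : Set X}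
    (hgf : LeftInvOn g f s) (hf : ContinuousOn f s) (hg : ContinuousOn g (f '' s)) :
    ∃ e : s ≃ₜ f '' s, ∀ x, (e x : Y) = f x := by
  have hgs : MapsTo g (f '' s) s := by
    rintro _ ⟨x, hx, rfl⟩
    rwa [hgf hx]
  exact ⟨{ toFun := (mapsTo_image f s).restrict
           invFun := hgs.restrict
           left_inv := fun x => Subtype.ext (hgf x.2)
           right_inv := by rintro ⟨_, x, hx, rfl⟩; exact Subtype.ext (congrArg f (hgf hx))
           continuous_toFun := hf.mapsToRestrict _
           continuous_invFun := hg.mapsToRestrict hgs }, fun _ => rfl⟩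

end

theorem weakHomeomorphism_local_homeomorphism
    {X Y : Type*} [TopologicalSpace X] [TopologicalSpace Y]
    (h : X → Y) (g : Y → X)
    (hgl : Function.LeftInverse g h) (hgr : Function.RightInverse g h)
    (hh : WeaklyDiscontinuous h) (hg : WeaklyDiscontinuous g) :
    ∀ A : Set X, IsClosed A → A.Nonempty →
      ∃ U : Set X, U ⊆ A ∧ U.Nonempty ∧ (∃ V : Set X, IsOpen V ∧ U = A ∩ V) ∧
        (∃ W : Set Y, IsOpen W ∧ h '' U = closure (h '' U) ∩ W) ∧
        ∃ e : ↥U ≃ₜ ↥(h '' U), ∀ x : ↥U, (e x : Y) = h x := by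
  intro A hA hAne
  obtain ⟨_, -, hU₁ne, ⟨V₁, hV₁, rfl⟩, hhU₁⟩ := hh A hAne
  set U₁ := A ∩ V₁
  obtain ⟨_, -, hWne, ⟨V₂, hV₂, rfl⟩, hgW⟩ := hg _ (hU₁ne.image h).closure
  set W := closure (h '' U₁) ∩ V₂
  have hgW_A : MapsTo g W A :=
    hgW.mapsTo_closure_inter_of_isOpen hV₂ hA (by rintro _ ⟨x, hx, rfl⟩; rw [hgl]; exact hx.1)
  obtain ⟨V₃, hV₃, hU⟩ :=
    hhU₁.exists_isOpen_inter_preimage_inter (fun x hx => subset_closure (mem_image_of_mem h hx)) hV₂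
  obtain ⟨V₄, hV₄, hgV₄⟩ := continuousOn_iff'.mp hgW V₁ hV₁
  set U := U₁ ∩ h ⁻¹' W
  have hhU : h '' U = V₄ ∩ W := by
    rw [image_inter_preimage, image_eq_preimage_of_inverse hgl hgr, preimage_inter, inter_assoc,
      inter_eq_right.2 (inter_subset_right.trans hgW_A.subset_preimage), hgV₄]
  have hUne : U.Nonempty := by
    rw [← image_nonempty, image_inter_preimage]
    obtain ⟨y, hyT, hyV₂⟩ := (closure_inter_open_nonempty_iff hV₂).1 hWne
    exact ⟨y, hyT, subset_closure hyT, hyV₂⟩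
  refine ⟨U, fun x hx => hx.1.1, hUne,
    ⟨V₁ ∩ V₃, hV₁.inter hV₃, by rw [hU, inter_assoc]⟩, ?_, ?_⟩
  · rw [hhU]
    exact (hV₄.isLocallyClosed.inter
      (isClosed_closure.isLocallyClosed.inter hV₂.isLocallyClosed)).exists_isOpen_eq_closure_inter
  · exact (hgl.leftInvOn U).exists_homeomorph_image (hhU₁.mono inter_subset_left)
      (hgW.mono (hhU ▸ inter_subset_right))
end

section
/- Let h : X → Y be a weak homeomorphism between topological spaces. Then X is hereditarily Baire if and only if Y is hereditarily Baire. -/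
/-!
A weak homeomorphism is a genuine homeomorphism on "many" small pieces: every nonempty locally
closed `A ⊆ Y` has a nonempty relatively open piece `h '' U`, with `U ⊆ X` locally closed, on which
`h` and `h⁻¹` are both continuous. Hereditary Baireness is equivalent to all locally closed
subspaces being Baire, and a space is Baire as soon as every nonempty open set contains a nonempty
open Baire subspace; so Baireness of the pieces `U` passes to every locally closed `A ⊆ Y`.
-/

open Set Function Topology

section

variable {X Y : Type*} [TopologicalSpace X] [TopologicalSpace Y]

theorem baireSpace_of_forall_exists_baireSpace_inter {A : Set Y}
    (hA : ∀ V : Set Y, IsOpen V → (A ∩ V).Nonempty →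
      ∃ V' : Set Y, IsOpen V' ∧ (A ∩ V').Nonempty ∧ A ∩ V' ⊆ V ∧ BaireSpace ↥(A ∩ V')) :
    BaireSpace A := by
  refine ⟨fun f hfo hfd => dense_iff_inter_open.mpr ?_⟩
  rintro O hO ⟨a, haO⟩
  obtain ⟨V, hV, rfl⟩ := isOpen_induced_iff.mp hO
  obtain ⟨V', hV', ⟨b, hb⟩, hV'V, hbaire⟩ := hA V hV ⟨a, a.2, haO⟩
  have hp : IsOpenEmbedding (inclusion (inter_subset_left : A ∩ V' ⊆ A)) :=
    .inclusion _ (by simpa using hV'.preimage continuous_subtype_val)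
  have : Nonempty ↥(A ∩ V') := ⟨⟨b, hb⟩⟩
  obtain ⟨x, hx⟩ := (dense_iInter_of_isOpen_nat (fun n => (hfo n).preimage hp.continuous)
    (fun n => (hfd n).preimage hp.isOpenMap)).nonempty
  exact ⟨inclusion inter_subset_left x, hV'V x.2, by simpa using hx⟩

theorem IsLocallyClosed.baireSpace_of_closure {A : Set X} (hA : IsLocallyClosed A)
    [BaireSpace (closure A)] : BaireSpace A :=
  (IsOpenEmbedding.inclusion subset_closure hA.isOpen_preimage_val_closure).baireSpace

def Function.LeftInverse.homeomorphImage {h : X → Y} {g : Y → X} (hgl : LeftInverse g h)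
    {U : Set X} (hh : ContinuousOn h U) (hg : ContinuousOn g (h '' U)) : U ≃ₜ h '' U where
  toFun := MapsTo.restrict h U (h '' U) (mapsTo_image h U)
  invFun := MapsTo.restrict g (h '' U) U (by rintro _ ⟨x, hx, rfl⟩; rwa [hgl x])
  left_inv x := Subtype.ext (hgl x)
  right_inv := by rintro ⟨_, x, hx, rfl⟩; exact Subtype.ext (congrArg h (hgl x))
  continuous_toFun := hh.mapsToRestrict _
  continuous_invFun := hg.mapsToRestrict _

/-- The piece is cut out of `closure (g '' W)`, which makes it locally closed; `h` maps it into
`closure W` by continuity, and intersecting with the open set `coborder W` brings it into `W`. -/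
theorem WeaklyDiscontinuous.exists_isLocallyClosed_image_eq_inter {h : X → Y} {g : Y → X}
    (hh : WeaklyDiscontinuous h) (hgl : LeftInverse g h) (hgr : RightInverse g h)
    {W : Set Y} (hW : IsLocallyClosed W) (hWne : W.Nonempty) (hgW : ContinuousOn g W) :
    ∃ U : Set X, IsLocallyClosed U ∧ U.Nonempty ∧ ContinuousOn h U ∧
      ∃ V : Set Y, IsOpen V ∧ h '' U = W ∩ V := by
  set B := g '' W
  obtain ⟨-, -, ⟨x₀, hx₀⟩, ⟨V, hV, rfl⟩, hhB⟩ := hh (closure B) (hWne.image g).closure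
  have hclosure : ∀ x ∈ closure B ∩ V, h x ∈ closure W := by
    intro x hx
    have := ((hhB x hx).mono (inter_subset_inter_left V subset_closure)).mem_closure_image
      (hV.closure_inter hx)
    exact closure_mono ((image_mono inter_subset_left).trans (hgr.image_image W).subset) this
  obtain ⟨V₁, hV₁, hV₁eq⟩ := continuousOn_iff'.mp hhB _ hW.isOpen_coborder
  set U := closure B ∩ V ∩ V₁
  have hUeq : U = closure B ∩ V ∩ h ⁻¹' coborder W := by
    rw [inter_comm _ (h ⁻¹' _), hV₁eq, inter_comm]
  have hhU : h '' U ⊆ W := by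
    rintro _ ⟨x, hx, rfl⟩
    rw [hUeq] at hx
    exact closure_inter_coborder.subset ⟨hclosure x hx.1, hx.2⟩
  have hgU : W ∩ g ⁻¹' U = W ∩ g ⁻¹' (V ∩ V₁) := by
    ext w
    simp only [U, mem_inter_iff, mem_preimage]
    refine and_congr_right fun hw => ?_
    have hB : g w ∈ closure B := subset_closure (mem_image_of_mem g hw)
    simp only [hB, true_and]
  obtain ⟨V₂, hV₂, hV₂eq⟩ := continuousOn_iff'.mp hgW _ (hV.inter hV₁)
  refine ⟨U, (isClosed_closure.isLocallyClosed.inter hV.isLocallyClosed).inter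
    hV₁.isLocallyClosed, ?_, hhB.mono inter_subset_left, V₂, hV₂, ?_⟩
  · obtain ⟨_, ⟨w, hw, rfl⟩, hwV⟩ := (closure_inter_open_nonempty_iff hV).mp ⟨x₀, hx₀⟩
    refine ⟨g w, ?_⟩
    rw [hUeq]
    exact ⟨⟨subset_closure (mem_image_of_mem g hw), hwV⟩, by simpa [hgr w] using subset_coborder hw⟩
  · rw [← inter_eq_left.mpr hhU, image_eq_preimage_of_inverse hgl hgr, inter_comm, hgU,
      inter_comm W, hV₂eq, inter_comm]

theorem baireSpace_of_weaklyDiscontinuous_of_isLocallyClosed {h : X → Y} {g : Y → X}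
    (hgl : LeftInverse g h) (hgr : RightInverse g h)
    (hh : WeaklyDiscontinuous h) (hg : WeaklyDiscontinuous g)
    (hX : ∀ C : Set X, IsClosed C → BaireSpace C) {A : Set Y} (hA : IsLocallyClosed A) :
    BaireSpace A := by
  refine baireSpace_of_forall_exists_baireSpace_inter fun V₀ hV₀ hne => ?_
  obtain ⟨-, -, hWne, ⟨V₁, hV₁, rfl⟩, hgW⟩ := hg (A ∩ V₀) hne
  obtain ⟨U, hU, ⟨x, hx⟩, hhU, V₂, hV₂, hUeq⟩ :=
    hh.exists_isLocallyClosed_image_eq_inter hgl hgr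
      ((hA.inter hV₀.isLocallyClosed).inter hV₁.isLocallyClosed) hWne hgW
  have hAeq : A ∩ (V₀ ∩ V₁ ∩ V₂) = h '' U := by rw [hUeq]; simp only [inter_assoc]
  have := hX (closure U) isClosed_closure
  have := hU.baireSpace_of_closure
  refine ⟨V₀ ∩ V₁ ∩ V₂, (hV₀.inter hV₁).inter hV₂, ⟨h x, hAeq ▸ mem_image_of_mem h hx⟩,
    fun y hy => hy.2.1.1, ?_⟩
  rw [hAeq]
  exact (hgl.homeomorphImage hhU (hgW.mono (hUeq.trans_subset inter_subset_left))).baireSpace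

end

theorem hereditarilyBaire_preserved_by_weakHomeomorphism
    {X Y : Type*} [TopologicalSpace X] [TopologicalSpace Y]
    (h : X → Y) (g : Y → X)
    (hgl : Function.LeftInverse g h) (hgr : Function.RightInverse g h)
    (hh : WeaklyDiscontinuous h) (hg : WeaklyDiscontinuous g) :
    (∀ C : Set X, IsClosed C → BaireSpace ↥C) ↔
    (∀ C : Set Y, IsClosed C → BaireSpace ↥C) :=
  ⟨fun hX _ hC => baireSpace_of_weaklyDiscontinuous_of_isLocallyClosed hgl hgr hh hg hX
      hC.isLocallyClosed,
    fun hY _ hC => baireSpace_of_weaklyDiscontinuous_of_isLocallyClosed hgr hgl hg hh hY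
      hC.isLocallyClosed⟩
end
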